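/- arXiv:2310.12777 — 8 statements merged into one kernel-verified Lean document; each statement's English description precedes it below -/
import Mathlib

section
/- For every connected graph G on n ≥ 3 vertices, the remoteness satisfies ρ(G) ≤ n/2, with equality if and only if G is the path P_n. -/
open SimpleGraph Finset

/-- The transmission of a vertex: the sum of distances from `v` to all other vertices. -/
noncomputable def transmission {n : ℕ} (G : SimpleGraph (Fin n)) (v : Fin n) : ℕ :=
  ∑ u, G.dist v u

/-- The proximity: the minimum average distance from a vertex to all others. -/
noncomputable def proximity {n : ℕ} (G : SimpleGraph (Fin n)) : ℝ :=
  sInf {x : ℝ | ∃ v : Fin n, x = transmission G v} / (n - 1)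

/-- The remoteness: the maximum average distance from a vertex to all others. -/
noncomputable def remoteness {n : ℕ} (G : SimpleGraph (Fin n)) : ℝ :=
  sSup {x : ℝ | ∃ v : Fin n, x = transmission G v} / (n - 1)

/-- The penultimate vertex on a geodesic: if `dist v u ≠ 0` there is a neighbor `b` of `u`
with `dist v b + 1 = dist v u`. -/
lemma exists_adj_dist_pred {V : Type*} {G : SimpleGraph V} {v u : V} (h : G.dist v u ≠ 0) :
    ∃ b, G.Adj b u ∧ G.dist v b + 1 = G.dist v u := by
  obtain ⟨p, hp⟩ := SimpleGraph.exists_walk_of_dist_ne_zero h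
  cases hr : p.reverse with
  | nil =>
      exfalso
      have : p.length = 0 := by
        have := congrArg SimpleGraph.Walk.length hr
        simpa using this
      omega
  | cons hadj q =>
      rename_i b
      have hreach : G.Reachable v b := ⟨q.reverse⟩
      obtain ⟨w, hw⟩ := hreach.exists_walk_length_eq_dist
      refine ⟨b, hadj.symm, ?_⟩
      have h1 : G.dist v b ≤ p.length - 1 := by
        have hq : q.reverse.length = p.length - 1 := by
          have := congrArg SimpleGraph.Walk.length hr
          simp at this
          simp [this]
        exact hq ▸ SimpleGraph.dist_le q.reverse
      have h2 : G.dist v u ≤ G.dist v b + 1 := by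
        have : (w.concat hadj.symm).length = G.dist v b + 1 := by simp [hw]
        exact this ▸ SimpleGraph.dist_le _
      omega

/-- Intermediate value property of graph distances. -/
lemma exists_dist_eq_min {V : Type*} {G : SimpleGraph V} (v u : V) (j : ℕ) :
    ∃ w, G.dist v w = min j (G.dist v u) := by
  have key : ∀ m u, G.dist v u = m → j < m → ∃ w, G.dist v w = j := by
    intro m
    induction m using Nat.strong_induction_on with
    | _ m ih =>
      intro u hm hj
      have hne : G.dist v u ≠ 0 := by omega
      obtain ⟨b, hb, hbd⟩ := exists_adj_dist_pred hne
      by_cases hj' : G.dist v b ≤ j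
      · exact ⟨b, by omega⟩
      · exact ih (G.dist v b) (by omega) b rfl (by omega)
  by_cases hj : G.dist v u ≤ j
  · exact ⟨u, by omega⟩
  · obtain ⟨w, hw⟩ := key (G.dist v u) u rfl (by omega)
    exact ⟨w, by omega⟩

open scoped Classical

lemma card_level_le {n : ℕ} {G : SimpleGraph (Fin n)} (v : Fin n) (k : ℕ) :
    (univ.filter fun u => k < G.dist v u).card + (k + 1) ≤ n ∨
      (univ.filter fun u => k < G.dist v u) = ∅ := by
  rcases Finset.eq_empty_or_nonempty (univ.filter fun u => k < G.dist v u) with he | ⟨u0, hu0⟩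
  · exact Or.inr he
  · left
    rw [Finset.mem_filter] at hu0
    set w : ℕ → Fin n := fun j => (exists_dist_eq_min v u0 j).choose with hwdef
    have hw : ∀ j ≤ k, G.dist v (w j) = j := by
      intro j hj
      have hsp : G.dist v (w j) = min j (G.dist v u0) :=
        (exists_dist_eq_min (G := G) v u0 j).choose_spec
      omega
    set B : Finset (Fin n) := (Finset.range (k+1)).image w with hBdef
    have hBcard : B.card = k + 1 := by
      rw [hBdef, Finset.card_image_of_injOn, Finset.card_range]
      intro a ha b hb hab
      simp only [Finset.coe_range, Set.mem_Iio] at ha hb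
      have h1 := hw a (by omega)
      have h2 := hw b (by omega)
      rw [hab] at h1; omega
    have hdisj : Disjoint (univ.filter fun u => k < G.dist v u) B := by
      rw [Finset.disjoint_right]
      intro a haB haA
      rw [hBdef, Finset.mem_image] at haB
      obtain ⟨j, hj, rfl⟩ := haB
      rw [Finset.mem_range] at hj
      rw [Finset.mem_filter] at haA
      have := hw j (by omega)
      omega
    calc (univ.filter fun u => k < G.dist v u).card + (k+1)
        = ((univ.filter fun u => k < G.dist v u) ∪ B).card := by
          rw [Finset.card_union_of_disjoint hdisj, hBcard]
      _ ≤ (univ : Finset (Fin n)).card := Finset.card_le_card (Finset.subset_univ _)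
      _ = n := by simp

lemma transmission_key {n : ℕ} {G : SimpleGraph (Fin n)} (hG : G.Connected) (hn : 1 ≤ n)
    (v : Fin n) :
    2 * transmission G v ≤ n * (n - 1) ∧
      (2 * transmission G v = n * (n - 1) →
        ∀ m < n, (univ.filter fun u => G.dist v u = m).card = 1) := by
  have hdlt : ∀ u : Fin n, G.dist v u ≤ n - 1 := by
    intro u
    obtain ⟨p, hp, hl⟩ := hG.exists_path_of_dist v u
    have := hp.length_lt
    simp only [Fintype.card_fin] at this
    omega
  have hsum : transmission G v
      = ∑ k ∈ Finset.range (n-1), (univ.filter fun u => k < G.dist v u).card := by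
    have h1 : ∀ u : Fin n,
        G.dist v u = ∑ k ∈ Finset.range (n-1), if k < G.dist v u then 1 else 0 := by
      intro u
      have hf : ((Finset.range (n-1)).filter fun k => k < G.dist v u)
          = Finset.range (G.dist v u) := by
        ext a
        simp only [Finset.mem_filter, Finset.mem_range]
        have := hdlt u; omega
      rw [← Finset.card_filter, hf, Finset.card_range]
    calc transmission G v
        = ∑ u, ∑ k ∈ Finset.range (n-1), if k < G.dist v u then 1 else 0 :=
          Finset.sum_congr rfl (fun u _ => h1 u)
      _ = ∑ k ∈ Finset.range (n-1), ∑ u, if k < G.dist v u then 1 else 0 :=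
          Finset.sum_comm
      _ = ∑ k ∈ Finset.range (n-1), (univ.filter fun u => k < G.dist v u).card := by
          exact Finset.sum_congr rfl fun k _ => (Finset.card_filter _ _).symm
  have hterm : ∀ k ∈ Finset.range (n-1),
      (univ.filter fun u => k < G.dist v u).card ≤ n - 1 - k := by
    intro k _
    rcases card_level_le (G := G) v k with h | h
    · omega
    · rw [h]; simp
  have htot : (∑ k ∈ Finset.range (n-1), (n - 1 - k)) * 2 = n * (n - 1) := by
    have hrefl := Finset.sum_range_reflect (fun k => n - 1 - k) (n-1)
    have hre : ∑ j ∈ Finset.range (n-1), (n - 1 - (n - 1 - 1 - j))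
        = ∑ j ∈ Finset.range (n-1), (j+1) := by
      refine Finset.sum_congr rfl fun j hj => ?_
      rw [Finset.mem_range] at hj; omega
    have hsucc : ∑ j ∈ Finset.range (n-1+1), j = ∑ j ∈ Finset.range (n-1), (j+1) := by
      simp [Finset.sum_range_succ']
    have hgauss := Finset.sum_range_id_mul_two (n-1+1)
    have hrefl2 : ∑ j ∈ Finset.range (n-1), (n - 1 - j) = ∑ j ∈ Finset.range (n-1), (j+1) :=
      hrefl.symm.trans hre
    calc (∑ k ∈ Finset.range (n-1), (n - 1 - k)) * 2
        = (∑ j ∈ Finset.range (n-1), (j+1)) * 2 := by rw [hrefl2]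
      _ = (∑ j ∈ Finset.range (n-1+1), j) * 2 := by rw [hsucc]
      _ = (n-1+1) * (n-1+1-1) := hgauss
      _ = n * (n-1) := by congr 1 <;> omega
  have hle : 2 * transmission G v ≤ n * (n-1) := by
    calc 2 * transmission G v
        = (∑ k ∈ Finset.range (n-1), (univ.filter fun u => k < G.dist v u).card) * 2 := by
          rw [hsum]; ring
      _ ≤ (∑ k ∈ Finset.range (n-1), (n - 1 - k)) * 2 := by
          exact Nat.mul_le_mul_right 2 (Finset.sum_le_sum hterm)
      _ = n * (n-1) := htot
  refine ⟨hle, fun heq => ?_⟩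
  have hsums : ∑ k ∈ Finset.range (n-1), (univ.filter fun u => k < G.dist v u).card
      = ∑ k ∈ Finset.range (n-1), (n - 1 - k) := by
    have h2 : (∑ k ∈ Finset.range (n-1), (univ.filter fun u => k < G.dist v u).card) * 2
        = (∑ k ∈ Finset.range (n-1), (n - 1 - k)) * 2 := by
      rw [htot, ← heq, hsum]; ring
    omega
  have hptw : ∀ k ∈ Finset.range (n-1),
      (univ.filter fun u => k < G.dist v u).card = n - 1 - k := by
    by_contra hcon
    push_neg at hcon
    obtain ⟨k0, hk0, hne⟩ := hcon
    have := Finset.sum_lt_sum hterm ⟨k0, hk0, lt_of_le_of_ne (hterm k0 hk0) hne⟩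
    omega
  have hA : ∀ m ≤ n, (univ.filter fun u => m ≤ G.dist v u).card = n - m := by
    intro m hm
    match m with
    | 0 => simp
    | (k+1) =>
      by_cases hk : k < n - 1
      · have := hptw k (Finset.mem_range.mpr hk)
        have hcongr : (univ.filter fun u => k + 1 ≤ G.dist v u)
            = (univ.filter fun u => k < G.dist v u) := by
          apply Finset.filter_congr; intro x _; constructor <;> (intro; omega)
        rw [hcongr, this]; omega
      · have hempty : (univ.filter fun u => k + 1 ≤ G.dist v u) = ∅ := by
          apply Finset.filter_false_of_mem
          intro x _
          have := hdlt x; omega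
        rw [hempty]; simp; omega
  intro m hm
  have hsub : (univ.filter fun u => m + 1 ≤ G.dist v u)
      ⊆ (univ.filter fun u => m ≤ G.dist v u) := by
    intro x hx
    simp only [Finset.mem_filter, Finset.mem_univ, true_and] at hx ⊢
    omega
  have hlevel : (univ.filter fun u => G.dist v u = m)
      = (univ.filter fun u => m ≤ G.dist v u) \ (univ.filter fun u => m + 1 ≤ G.dist v u) := by
    ext x
    simp only [Finset.mem_filter, Finset.mem_sdiff, Finset.mem_univ, true_and, not_and]
    omega
  rw [hlevel, Finset.card_sdiff_of_subset hsub, hA m (le_of_lt hm), hA (m+1) hm]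
  omega

/-- From singleton distance levels, construct an isomorphism with the path graph. -/
lemma iso_of_levels {n : ℕ} {G : SimpleGraph (Fin n)} (hG : G.Connected) (v : Fin n)
    (hlev : ∀ m < n, (univ.filter fun u => G.dist v u = m).card = 1) :
    Nonempty (G ≃g pathGraph n) := by
  have hc : ∀ m : Fin n, ∃ a, (univ.filter fun u => G.dist v u = m.val) = {a} :=
    fun m => Finset.card_eq_one.mp (hlev m.val m.isLt)
  set e : Fin n → Fin n := fun m => (hc m).choose with he
  have hspec : ∀ m : Fin n, (univ.filter fun u => G.dist v u = m.val) = {e m} :=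
    fun m => (hc m).choose_spec
  have hde : ∀ m : Fin n, G.dist v (e m) = m.val := by
    intro m
    have : e m ∈ ({e m} : Finset (Fin n)) := Finset.mem_singleton_self _
    rw [← hspec m, Finset.mem_filter] at this
    exact this.2
  have huniq : ∀ (u : Fin n) (m : Fin n), G.dist v u = m.val → u = e m := by
    intro u m h
    have : u ∈ (univ.filter fun u => G.dist v u = m.val) := by
      rw [Finset.mem_filter]; exact ⟨Finset.mem_univ _, h⟩
    rw [hspec m, Finset.mem_singleton] at this
    exact this
  have hinj : Function.Injective e := by
    intro a b hab
    have h1 := hde a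
    rw [hab] at h1
    have h2 := hde b
    exact Fin.ext (by omega)
  have hbij : Function.Bijective e := (Finite.injective_iff_bijective).mp hinj
  have hup : ∀ (m : ℕ) (h1 : m < n) (h2 : m + 1 < n),
      G.Adj (e ⟨m, h1⟩) (e ⟨m+1, h2⟩) := by
    intro m h1 h2
    have hd : G.dist v (e ⟨m+1, h2⟩) = m + 1 := hde ⟨m+1, h2⟩
    have hnz : G.dist v (e ⟨m+1, h2⟩) ≠ 0 := by omega
    obtain ⟨b, hb, hbd⟩ := exists_adj_dist_pred hnz
    have : b = e ⟨m, h1⟩ := huniq b ⟨m, h1⟩ (show G.dist v b = m by omega)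
    exact this ▸ hb
  have hdiff : ∀ u w : Fin n, G.Adj u w →
      G.dist v u ≠ G.dist v w ∧ G.dist v u ≤ G.dist v w + 1 ∧ G.dist v w ≤ G.dist v u + 1 := by
    intro u w hadj
    have hdu : G.dist v u < n := by
      obtain ⟨p, hp, hl⟩ := hG.exists_path_of_dist v u
      have := hp.length_lt
      simp only [Fintype.card_fin] at this
      omega
    have hne : G.dist v u ≠ G.dist v w := by
      intro hcon
      have h1 : u = e ⟨G.dist v u, hdu⟩ := huniq u _ rfl
      have h2 : w = e ⟨G.dist v u, hdu⟩ := huniq w _ hcon.symm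
      exact hadj.ne (h1.trans h2.symm)
    have t1 : G.dist v u ≤ G.dist v w + 1 := by
      have := hG.dist_triangle (u := v) (v := w) (w := u)
      have hone : G.dist w u = 1 := SimpleGraph.dist_eq_one_iff_adj.mpr hadj.symm
      omega
    have t2 : G.dist v w ≤ G.dist v u + 1 := by
      have := hG.dist_triangle (u := v) (v := u) (w := w)
      have hone : G.dist u w = 1 := SimpleGraph.dist_eq_one_iff_adj.mpr hadj
      omega
    exact ⟨hne, t1, t2⟩
  refine ⟨(RelIso.mk (Equiv.ofBijective e hbij) ?_).symm⟩
  intro a b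
  simp only [Equiv.ofBijective_apply, pathGraph_adj]
  constructor
  · intro hadj
    obtain ⟨hne, t1, t2⟩ := hdiff _ _ hadj
    rw [hde a, hde b] at *
    omega
  · intro h
    have hal := a.isLt
    have hbl := b.isLt
    rcases h with h | h
    · have hlt : a.val + 1 < n := by omega
      have hthis := hup a.val hal hlt
      have h1 : e (⟨a.val, hal⟩ : Fin n) = e a := congrArg e (Fin.ext rfl)
      have h2 : e (⟨a.val + 1, hlt⟩ : Fin n) = e b := congrArg e (Fin.ext h)
      rwa [h1, h2] at hthis
    · have hlt : b.val + 1 < n := by omega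
      have hthis := hup b.val hbl hlt
      have h1 : e (⟨b.val, hbl⟩ : Fin n) = e b := congrArg e (Fin.ext rfl)
      have h2 : e (⟨b.val + 1, hlt⟩ : Fin n) = e a := congrArg e (Fin.ext h)
      rw [h1, h2] at hthis
      exact hthis.symm

lemma iso_dist_le {V W : Type*} {G : SimpleGraph V} {H : SimpleGraph W} (f : G ≃g H)
    (a b : V) : H.dist (f a) (f b) ≤ G.dist a b := by
  by_cases h : G.Reachable a b
  · obtain ⟨p, hp⟩ := h.exists_walk_length_eq_dist
    calc H.dist (f a) (f b) ≤ (p.map f.toHom).length := SimpleGraph.dist_le _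
      _ = p.length := SimpleGraph.Walk.length_map _ _
      _ = G.dist a b := hp
  · have h' : ¬ H.Reachable (f a) (f b) := by
      intro ⟨q⟩
      exact h ⟨(q.map f.symm.toHom).copy (by simp) (by simp)⟩
    rw [SimpleGraph.dist_eq_zero_of_not_reachable h,
        SimpleGraph.dist_eq_zero_of_not_reachable h']

lemma iso_dist_eq {V W : Type*} {G : SimpleGraph V} {H : SimpleGraph W} (f : G ≃g H)
    (a b : V) : H.dist (f a) (f b) = G.dist a b := by
  refine le_antisymm (iso_dist_le f a b) ?_
  have := iso_dist_le f.symm (f a) (f b)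
  simpa using this

lemma pathGraph_dist {n : ℕ} (hn : 0 < n) (u : Fin n) :
    (pathGraph n).dist ⟨0, hn⟩ u = u.val := by
  have hlow : ∀ (i j : Fin n) (w : (pathGraph n).Walk i j), j.val ≤ i.val + w.length := by
    intro i j w
    induction w with
    | nil => omega
    | cons hadj p ih =>
      rw [pathGraph_adj] at hadj
      simp only [SimpleGraph.Walk.length_cons]
      omega
  have hconn : (pathGraph n).Connected := by
    have : Nonempty (Fin n) := ⟨⟨0, hn⟩⟩
    exact ⟨pathGraph_preconnected n⟩
  have hup : ∀ (k : ℕ) (hk : k < n), (pathGraph n).dist ⟨0, hn⟩ ⟨k, hk⟩ ≤ k := by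
    intro k
    induction k with
    | zero => intro hk; rw [SimpleGraph.dist_self]
    | succ k ih =>
      intro hk
      have h1 : (pathGraph n).dist (⟨k, by omega⟩ : Fin n) ⟨k+1, hk⟩ = 1 := by
        rw [SimpleGraph.dist_eq_one_iff_adj, pathGraph_adj]
        left; rfl
      have := hconn.dist_triangle (u := ⟨0, hn⟩) (v := ⟨k, by omega⟩) (w := ⟨k+1, hk⟩)
      have := ih (by omega)
      omega
  refine le_antisymm ?_ ?_
  · exact hup u.val u.isLt
  · obtain ⟨p, hp⟩ := (hconn ⟨0, hn⟩ u).exists_walk_length_eq_dist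
    have hlw := hlow ⟨0, hn⟩ u p
    simp only [Fin.val_mk] at hlw
    omega

lemma transmission_path {n : ℕ} (hn : 0 < n) :
    2 * transmission (pathGraph n) ⟨0, hn⟩ = n * (n - 1) := by
  unfold transmission
  have h1 : ∑ u : Fin n, (pathGraph n).dist ⟨0, hn⟩ u = ∑ u : Fin n, u.val :=
    Finset.sum_congr rfl fun u _ => pathGraph_dist hn u
  rw [h1, Fin.sum_univ_eq_sum_range (fun i => i) n]
  have := Finset.sum_range_id_mul_two n
  omega

theorem remoteness_le_half {n : ℕ} (hn : 3 ≤ n) (G : SimpleGraph (Fin n))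
    (hG : G.Connected) :
    remoteness G ≤ n / 2 ∧
      (remoteness G = n / 2 ↔ Nonempty (G ≃g SimpleGraph.pathGraph n)) := by
  have hne : Nonempty (Fin n) := ⟨⟨0, by omega⟩⟩
  have hune : (univ : Finset (Fin n)).Nonempty := Finset.univ_nonempty
  set M : ℕ := univ.sup' hune (transmission G) with hM
  obtain ⟨v1, _, hv1⟩ := Finset.exists_mem_eq_sup' hune (transmission G)
  have hgreat : IsGreatest {x : ℝ | ∃ v : Fin n, x = transmission G v} (M : ℝ) := by
    constructor
    · exact ⟨v1, Nat.cast_inj.mpr hv1⟩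
    · rintro x ⟨v, rfl⟩
      exact_mod_cast Finset.le_sup' (transmission G) (Finset.mem_univ v)
  have hsSup : sSup {x : ℝ | ∃ v : Fin n, x = transmission G v} = (M : ℝ) :=
    hgreat.csSup_eq
  have hrem : remoteness G = (M : ℝ) / ((n : ℝ) - 1) := by
    rw [remoteness, hsSup]
  have hkey := transmission_key hG (by omega) v1
  have hMle : 2 * M ≤ n * (n - 1) := by rw [hM, hv1]; exact hkey.1
  have hnR : (0 : ℝ) < (n : ℝ) - 1 := by
    have : (3 : ℝ) ≤ (n : ℝ) := by exact_mod_cast hn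
    linarith
  have hcast : ((n * (n - 1) : ℕ) : ℝ) = (n : ℝ) * ((n : ℝ) - 1) := by
    push_cast [Nat.cast_sub (by omega : 1 ≤ n)]
    ring
  have hbound : remoteness G ≤ n / 2 := by
    rw [hrem, div_le_div_iff₀ hnR (by norm_num : (0:ℝ) < 2)]
    have h2 : ((2 * M : ℕ) : ℝ) ≤ ((n * (n - 1) : ℕ) : ℝ) := by exact_mod_cast hMle
    rw [hcast] at h2
    push_cast at h2 ⊢
    linarith
  refine ⟨hbound, ?_, ?_⟩
  · -- equality → path
    intro heq
    rw [hrem] at heq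
    have h2M : 2 * M = n * (n - 1) := by
      have : (M : ℝ) * 2 = (n : ℝ) * ((n : ℝ) - 1) := by
        field_simp at heq
        linarith
      have : ((2 * M : ℕ) : ℝ) = ((n * (n - 1) : ℕ) : ℝ) := by
        rw [hcast]; push_cast; linarith
      exact_mod_cast this
    have hlev := hkey.2 (by rw [← hv1, ← hM]; exact h2M)
    exact iso_of_levels hG v1 hlev
  · -- path → equality
    rintro ⟨f⟩
    have hn0 : 0 < n := by omega
    set z0 : Fin n := ⟨0, hn0⟩ with hz0
    have htr : transmission G (f.symm z0) = transmission (pathGraph n) z0 := by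
      unfold transmission
      rw [← Equiv.sum_comp f.symm.toEquiv (fun u => G.dist (f.symm z0) u)]
      refine Finset.sum_congr rfl fun w _ => ?_
      exact iso_dist_eq f.symm z0 w
    have h2t : 2 * transmission G (f.symm z0) = n * (n - 1) := by
      rw [htr]; exact transmission_path hn0
    have hMge : transmission G (f.symm z0) ≤ M :=
      Finset.le_sup' (transmission G) (Finset.mem_univ _)
    have h2M : 2 * M = n * (n - 1) := by omega
    rw [hrem, div_eq_div_iff (ne_of_gt hnR) (by norm_num : (2:ℝ) ≠ 0)]
    have : ((2 * M : ℕ) : ℝ) = ((n * (n - 1) : ℕ) : ℝ) := by exact_mod_cast h2M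
    rw [hcast] at this
    push_cast at this ⊢
    linarith
end

section
/- For every connected graph G on n ≥ 3 vertices, ρ(G) - π(G) ≤ (n-1)/4 if n is odd, and ρ(G) - π(G) ≤ (n-1)/4 - 1/(4n-4) if n is even. -/
open SimpleGraph Finset

lemma dist_getVert_le {V : Type*} {G : SimpleGraph V} (hG : G.Connected) {v u : V}
    (p : G.Walk v u) : ∀ i, i ≤ p.length → G.dist v (p.getVert i) ≤ i := by
  intro i
  induction i with
  | zero => intro _; simp [p.getVert_zero]
  | succ i ih =>
    intro hi
    have h1 : G.Adj (p.getVert i) (p.getVert (i+1)) := p.adj_getVert_succ (by omega)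
    calc G.dist v (p.getVert (i+1))
        ≤ G.dist v (p.getVert i) + G.dist (p.getVert i) (p.getVert (i+1)) := hG.dist_triangle
      _ ≤ i + 1 := by
          have := ih (by omega)
          have h2 : G.dist (p.getVert i) (p.getVert (i+1)) = 1 :=
            (SimpleGraph.dist_eq_one_iff_adj).2 h1
          omega

lemma dist_getVert_eq {V : Type*} {G : SimpleGraph V} (hG : G.Connected) {v u : V}
    (p : G.Walk v u) (hp : p.length = G.dist v u) {i : ℕ} (hi : i ≤ p.length) :
    G.dist v (p.getVert i) = i ∧ G.dist (p.getVert i) u = p.length - i := by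
  have h1 : G.dist v (p.getVert i) ≤ i := dist_getVert_le hG p i hi
  have h2 : G.dist (p.getVert i) u ≤ p.length - i := by
    have hrev : p.reverse.getVert (p.length - i) = p.getVert i := by
      rw [p.getVert_reverse]; congr 1; omega
    have := dist_getVert_le hG p.reverse (p.length - i) (by rw [p.length_reverse]; omega)
    rw [hrev] at this
    rwa [SimpleGraph.dist_comm]
  have h3 : G.dist v u ≤ G.dist v (p.getVert i) + G.dist (p.getVert i) u := hG.dist_triangle
  omega

lemma transmission_diff {n : ℕ} {G : SimpleGraph (Fin n)} (hG : G.Connected) (u v : Fin n) :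
    (transmission G u : ℤ) - transmission G v
      ≤ (G.dist v u : ℤ) * ((n : ℤ) - 1 - G.dist v u) := by
  obtain ⟨p, hp⟩ := hG.exists_walk_length_eq_dist v u
  set d := p.length with hd
  set S : Finset (Fin n) := (Finset.range (d+1)).image p.getVert with hS
  have hinj : Set.InjOn p.getVert (Finset.range (d+1)) := by
    intro i hi j hj hij
    simp only [Finset.coe_range, Set.mem_Iio] at hi hj
    have h1 := (dist_getVert_eq hG p hp (i := i) (by omega)).1
    have h2 := (dist_getVert_eq hG p hp (i := j) (by omega)).1
    rw [hij] at h1; omega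
  have hcard : S.card = d + 1 := by
    rw [hS, Finset.card_image_of_injOn hinj, Finset.card_range]
  have hdn : d + 1 ≤ n := by
    have := Finset.card_le_card (Finset.subset_univ S)
    simpa [hcard] using this
  have hsplit : (transmission G u : ℤ) - transmission G v
      = ∑ w, ((G.dist u w : ℤ) - G.dist v w) := by
    simp [transmission, Finset.sum_sub_distrib]
  rw [hsplit]
  have hsdiff : ∑ w ∈ Finset.univ \ S, ((G.dist u w : ℤ) - G.dist v w)
      + ∑ w ∈ S, ((G.dist u w : ℤ) - G.dist v w)
      = ∑ w, ((G.dist u w : ℤ) - G.dist v w) :=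
    Finset.sum_sdiff (Finset.subset_univ S)
  have hSsum : ∑ w ∈ S, ((G.dist u w : ℤ) - G.dist v w) = 0 := by
    rw [hS, Finset.sum_image (fun a ha b hb => hinj (by simpa using ha) (by simpa using hb))]
    have heach : ∀ i ∈ Finset.range (d+1),
        ((G.dist u (p.getVert i) : ℤ) - G.dist v (p.getVert i))
          = ((d - i : ℕ) : ℤ) - (i : ℤ) := by
      intro i hi
      rw [Finset.mem_range] at hi
      obtain ⟨h1, h2⟩ := dist_getVert_eq hG p hp (i := i) (by omega)
      rw [SimpleGraph.dist_comm, h2, h1]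
    rw [Finset.sum_congr rfl heach]
    rw [Finset.sum_sub_distrib]
    rw [← Nat.cast_sum, ← Nat.cast_sum]
    have : ∑ i ∈ Finset.range (d+1), (d - i) = ∑ i ∈ Finset.range (d+1), i := by
      have := Finset.sum_range_reflect (fun i => i) (d+1)
      simpa using this
    rw [this]
    ring
  have hrest : ∑ w ∈ Finset.univ \ S, ((G.dist u w : ℤ) - G.dist v w)
      ≤ (Finset.univ \ S).card • (d : ℤ) := by
    apply Finset.sum_le_card_nsmul
    intro w _
    have htri : G.dist u w ≤ G.dist u v + G.dist v w := hG.dist_triangle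
    have : G.dist u v = d := by rw [SimpleGraph.dist_comm, ← hp]
    omega
  have hcard2 : (Finset.univ \ S).card = n - (d + 1) := by
    rw [Finset.card_sdiff_of_subset (Finset.subset_univ S), hcard, Finset.card_univ, Fintype.card_fin]
  rw [← hsdiff, hSsum, add_zero]
  calc ∑ w ∈ Finset.univ \ S, ((G.dist u w : ℤ) - G.dist v w)
      ≤ (Finset.univ \ S).card • (d : ℤ) := hrest
    _ = ((n - (d+1) : ℕ) : ℤ) * d := by rw [hcard2]; simp [nsmul_eq_mul]
    _ = (G.dist v u : ℤ) * ((n : ℤ) - 1 - G.dist v u) := by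
        rw [← hp]
        push_cast [Nat.cast_sub hdn]
        ring


theorem remoteness_sub_proximity {n : ℕ} (hn : 3 ≤ n) (G : SimpleGraph (Fin n))
    (hG : G.Connected) :
    (Odd n → remoteness G - proximity G ≤ (n - 1) / 4) ∧
    (Even n → remoteness G - proximity G ≤ (n - 1) / 4 - 1 / (4 * n - 4)) := by
  have hn3 : (3:ℝ) ≤ (n:ℝ) := by exact_mod_cast hn
  have hc : (0:ℝ) < (n:ℝ) - 1 := by linarith
  set f : Fin n → ℝ := fun v => (transmission G v : ℝ) with hf
  have hset : {x : ℝ | ∃ v : Fin n, x = transmission G v} = Set.range f := by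
    ext x
    simp only [Set.mem_setOf_eq, Set.mem_range, hf, eq_comm]
  have hne : (Set.range f).Nonempty := ⟨f ⟨0, by omega⟩, Set.mem_range_self _⟩
  obtain ⟨u₀, hu₀⟩ := Set.Nonempty.csSup_mem hne (Set.finite_range f)
  obtain ⟨v₀, hv₀⟩ := Set.Nonempty.csInf_mem hne (Set.finite_range f)
  have hdiff : remoteness G - proximity G = (f u₀ - f v₀) / ((n:ℝ) - 1) := by
    rw [remoteness, proximity, hset, hu₀, hv₀, div_sub_div_same]
  have hkey := transmission_diff hG u₀ v₀
  set D : ℤ := (G.dist v₀ u₀ : ℤ) with hD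
  have hodd : 4 * ((transmission G u₀ : ℤ) - transmission G v₀) ≤ ((n:ℤ) - 1)^2 := by
    nlinarith [sq_nonneg ((n:ℤ) - 1 - 2*D)]
  constructor
  · intro _
    rw [hdiff, div_le_div_iff₀ hc (by norm_num : (0:ℝ) < 4)]
    have h4 : (4:ℝ) * ((transmission G u₀ : ℝ) - transmission G v₀) ≤ ((n:ℝ) - 1)^2 := by
      have := (@Int.cast_le ℝ _).2 hodd
      push_cast at this
      linarith
    simp only [hf]
    nlinarith
  · intro heven
    have hpar : ((n:ℤ) - 1 - 2*D) ≠ 0 := by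
      obtain ⟨k, hk⟩ := heven
      have : (n:ℤ) = k + k := by exact_mod_cast hk
      omega
    have hsq : 1 ≤ ((n:ℤ) - 1 - 2*D)^2 := by
      have : 1 ≤ (n:ℤ) - 1 - 2*D ∨ (n:ℤ) - 1 - 2*D ≤ -1 := by omega
      rcases this with h | h <;> nlinarith
    have hev : 4 * ((transmission G u₀ : ℤ) - transmission G v₀) ≤ ((n:ℤ) - 1)^2 - 1 := by
      nlinarith
    have h4 : (4:ℝ) * ((transmission G u₀ : ℝ) - transmission G v₀)
        ≤ ((n:ℝ) - 1)^2 - 1 := by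
      have := (@Int.cast_le ℝ _).2 hev
      push_cast at this
      linarith
    have hrhs : ((n:ℝ) - 1) / 4 - 1 / (4 * (n:ℝ) - 4)
        = (((n:ℝ) - 1)^2 - 1) / (4 * ((n:ℝ) - 1)) := by
      have h1 : (4:ℝ) * (n:ℝ) - 4 ≠ 0 := by nlinarith
      have h2 : ((n:ℝ) - 1) ≠ 0 := ne_of_gt hc
      field_simp
    rw [hdiff, hrhs, div_le_div_iff₀ hc (by positivity)]
    simp only [hf]
    nlinarith
end

section
/- For every connected graph G on n vertices with diameter D, the proximity satisfies π(G) ≥ (p(p-1) + q(q-1))/(2(n-1)) + 1, where p = ⌈D/2⌉ and q = ⌊D/2⌋. -/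
open SimpleGraph Finset

/-- The diameter of a graph: the maximum distance between two vertices. -/
noncomputable def graphDiam {n : ℕ} (G : SimpleGraph (Fin n)) : ℕ :=
  Finset.univ.sup fun p : Fin n × Fin n => G.dist p.1 p.2

/-!
Take a diametral pair `x, y` and a shortest path `x = w₀, …, w_D = y`. For every vertex `v`,
`t(v) = (n - 1) + ∑ᵤ (d(v, u) - 1)` (truncated subtraction, so the `u = v` term is `0`), and the
path vertices alone contribute `C(p, 2) + C(q, 2)` to the sum: pairing `w_j` with `w_{D-j}`, the
triangle inequality gives `d(v, w_j) + d(v, w_{D-j}) ≥ d(w_j, w_{D-j}) = |D - 2j|`, and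
`∑_{j ≤ D} (|D - 2j| - 2) = 2 (C(p, 2) + C(q, 2))`.
-/

lemma Nat.sum_range_dist_two_mul_sub_two : ∀ D : ℕ,
    ∑ j ∈ range (D + 1), (Nat.dist D (2 * j) - 2) =
      2 * (((D + 1) / 2).choose 2 + (D / 2).choose 2)
  | 0 => by simp
  | 1 => by simp [sum_range_succ, Nat.dist]
  | D + 2 => by
    have hshift : ∀ j ∈ range (D + 1),
        Nat.dist (D + 2) (2 * (j + 1)) - 2 = Nat.dist D (2 * j) - 2 := by
      intro j _
      rw [show 2 * (j + 1) = 2 * j + 2 by ring, Nat.dist_add_add_right]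
    rw [sum_range_succ, sum_range_succ', sum_congr rfl hshift, Nat.sum_range_dist_two_mul_sub_two D,
      show (D + 2 + 1) / 2 = (D + 1) / 2 + 1 by omega, show (D + 2) / 2 = D / 2 + 1 by omega,
      Nat.choose_succ_succ', Nat.choose_succ_succ', Nat.choose_one_right, Nat.choose_one_right]
    simp only [Nat.dist, Nat.reduceAdd]
    omega

namespace SimpleGraph

variable {V : Type*} {G : SimpleGraph V}


lemma Walk.sub_le_dist_getVert {x y : V} (w : G.Walk x y) (hw : w.length = G.dist x y)
    {i j : ℕ} (hij : i ≤ j) (hj : j ≤ w.length) :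
    j - i ≤ G.dist (w.getVert i) (w.getVert j) := by
  have hxi : G.dist x (w.getVert i) ≤ i :=
    (dist_le (w.take i)).trans (by simp [Walk.take_length])
  have hjy : G.dist (w.getVert j) y ≤ w.length - j :=
    (dist_le (w.drop j)).trans (by simp [Walk.drop_length])
  have hxy : G.dist x y ≤ G.dist x (w.getVert i) + G.dist (w.getVert i) y :=
    Reachable.dist_triangle_left ⟨w.take i⟩ y
  have hiy : G.dist (w.getVert i) y ≤
      G.dist (w.getVert i) (w.getVert j) + G.dist (w.getVert j) y :=
    Reachable.dist_triangle_right ⟨w.drop j⟩ _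
  omega

lemma Walk.dist_two_mul_le_dist_getVert_add {x y : V} (hG : G.Connected) (w : G.Walk x y)
    (hw : w.length = G.dist x y) (v : V) {j : ℕ} (hj : j ≤ w.length) :
    Nat.dist w.length (2 * j) ≤ G.dist v (w.getVert j) + G.dist v (w.getVert (w.length - j)) := by
  have htri : G.dist (w.getVert j) (w.getVert (w.length - j)) ≤
      G.dist v (w.getVert j) + G.dist v (w.getVert (w.length - j)) := by
    rw [dist_comm (u := v)]
    exact hG.dist_triangle
  rcases le_total j (w.length - j) with h | h
  · have := w.sub_le_dist_getVert hw h (Nat.sub_le _ _)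
    simp only [Nat.dist]
    omega
  · have := w.sub_le_dist_getVert hw h hj
    rw [dist_comm] at this
    simp only [Nat.dist]
    omega

lemma Walk.choose_two_add_choose_two_le_sum_dist_getVert_sub_one {x y : V} (hG : G.Connected)
    (w : G.Walk x y) (hw : w.length = G.dist x y) (v : V) :
    ((w.length + 1) / 2).choose 2 + (w.length / 2).choose 2 ≤
      ∑ j ∈ range (w.length + 1), (G.dist v (w.getVert j) - 1) := by
  have hreflect := sum_range_reflect (fun j ↦ G.dist v (w.getVert j) - 1) (w.length + 1)
  simp only [add_tsub_cancel_right] at hreflect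
  suffices 2 * (((w.length + 1) / 2).choose 2 + (w.length / 2).choose 2) ≤
      ∑ j ∈ range (w.length + 1),
        ((G.dist v (w.getVert j) - 1) + (G.dist v (w.getVert (w.length - j)) - 1)) by
    rw [sum_add_distrib, hreflect] at this
    omega
  rw [← Nat.sum_range_dist_two_mul_sub_two]
  refine sum_le_sum fun j hj ↦ ?_
  have := w.dist_two_mul_le_dist_getVert_add hG hw v (Nat.lt_succ_iff.mp (mem_range.mp hj))
  omega

lemma Connected.sum_dist_eq_sum_dist_sub_one_add [Fintype V] (hG : G.Connected) (v : V) :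
    ∑ u, G.dist v u = ∑ u, (G.dist v u - 1) + (Fintype.card V - 1) := by
  classical
  have hpoint : ∀ u, G.dist v u = (G.dist v u - 1) + if u = v then 0 else 1 := by
    intro u
    split_ifs with h
    · simp [h]
    · have := hG.pos_dist_of_ne (Ne.symm h)
      omega
  rw [sum_congr rfl fun u _ ↦ hpoint u, sum_add_distrib, sum_ite, sum_const_zero, sum_const,
    filter_ne', card_erase_of_mem (mem_univ v), card_univ, smul_eq_mul, mul_one, zero_add]

lemma Walk.sum_dist_getVert_sub_one_le_sum {x y : V} [Fintype V] (w : G.Walk x y)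
    (hw : w.length = G.dist x y) (v : V) :
    ∑ j ∈ range (w.length + 1), (G.dist v (w.getVert j) - 1) ≤ ∑ u, (G.dist v u - 1) := by
  classical
  have hinj : Set.InjOn w.getVert (range (w.length + 1)) := fun i hi j hj hij ↦
    (w.isPath_of_length_eq_dist hw).getVert_injOn
      (Nat.lt_succ_iff.mp (mem_range.mp hi)) (Nat.lt_succ_iff.mp (mem_range.mp hj)) hij
  rw [← sum_image (f := fun u ↦ G.dist v u - 1) hinj]
  exact sum_le_sum_of_subset (subset_univ _)

end SimpleGraph

lemma exists_dist_eq_graphDiam {n : ℕ} [NeZero n] (G : SimpleGraph (Fin n)) :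
    ∃ x y, G.dist x y = graphDiam G := by
  obtain ⟨⟨x, y⟩, -, hxy⟩ :=
    exists_mem_eq_sup univ univ_nonempty fun p : Fin n × Fin n ↦ G.dist p.1 p.2
  exact ⟨x, y, hxy.symm⟩

lemma choose_two_add_choose_two_add_le_transmission {n : ℕ} {G : SimpleGraph (Fin n)}
    (hG : G.Connected) (v : Fin n) :
    ((graphDiam G + 1) / 2).choose 2 + (graphDiam G / 2).choose 2 + (n - 1) ≤
      transmission G v := by
  have : NeZero n := ⟨fun h ↦ (h ▸ v).elim0⟩
  obtain ⟨x, y, hxy⟩ := exists_dist_eq_graphDiam G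
  obtain ⟨w, hw⟩ := hG.exists_walk_length_eq_dist x y
  rw [transmission, hG.sum_dist_eq_sum_dist_sub_one_add, Fintype.card_fin, ← hxy, ← hw]
  gcongr
  exact (w.choose_two_add_choose_two_le_sum_dist_getVert_sub_one hG hw v).trans
    (w.sum_dist_getVert_sub_one_le_sum hw v)

lemma div_le_proximity {n : ℕ} [NeZero n] (G : SimpleGraph (Fin n)) {c : ℝ}
    (h : ∀ v, c ≤ transmission G v) : c / (n - 1) ≤ proximity G := by
  have hn : (1 : ℝ) ≤ n := Nat.one_le_cast.mpr NeZero.one_le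
  refine div_le_div_of_nonneg_right (le_csInf ⟨_, 0, rfl⟩ ?_) (by linarith)
  rintro _ ⟨v, rfl⟩
  exact h v

theorem proximity_lower_bound_diam {n : ℕ} (hn : 2 ≤ n) (G : SimpleGraph (Fin n))
    (hG : G.Connected) (p q : ℕ) (hp : p = (graphDiam G + 1) / 2) (hq : q = graphDiam G / 2) :
    ((p : ℝ) * (p - 1) + (q : ℝ) * (q - 1)) / (2 * (n - 1)) + 1 ≤ proximity G := by
  have : NeZero n := ⟨by omega⟩
  have hbound (v : Fin n) : ((p.choose 2 + q.choose 2 + (n - 1) : ℕ) : ℝ) ≤ transmission G v := by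
    subst hp hq
    exact_mod_cast choose_two_add_choose_two_add_le_transmission hG v
  refine le_of_eq_of_le ?_ (div_le_proximity G hbound)
  have hn1 : (n : ℝ) - 1 ≠ 0 := by
    have : (2 : ℝ) ≤ n := by exact_mod_cast hn
    linarith
  rw [Nat.cast_add, Nat.cast_add, Nat.cast_choose_two, Nat.cast_choose_two, Nat.cast_sub (by omega)]
  field_simp
  ring
end

section
/- For every connected graph G on n ≥ 3 vertices, the remoteness is at most the average eccentricity: ρ(G) ≤ ecc(G), with equality if and only if G is the complete graph K_n. -/
open SimpleGraph Finset

/-- The eccentricity of a vertex: the maximum distance from `v` to another vertex. -/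
noncomputable def eccentricity {n : ℕ} (G : SimpleGraph (Fin n)) (v : Fin n) : ℕ :=
  Finset.univ.sup fun u => G.dist v u

/-- The average eccentricity of a graph. -/
noncomputable def avgEcc {n : ℕ} (G : SimpleGraph (Fin n)) : ℝ :=
  (∑ v, (eccentricity G v : ℝ)) / n

/-!
Every vertex `v` satisfies `t(v) ≤ (n - 1) e(v)`, since each of the `n - 1` other vertices is
within distance `e(v)` of `v`, and `t(v) + e(v) ≤ ∑ e`, since `d(v, u) ≤ e(u)`. Adding the first
inequality to `n - 1` times the second gives `n t(v) ≤ (n - 1) ∑ e`, which at a vertex of maximal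
transmission is `ρ ≤ ecc`. In the equality case both inequalities are tight, so every `u ≠ v`
has `d(v, u) = e(v) = e(u)`; a neighbour of `v` forces this common value to be `1`, so the graph
is complete.
-/

section

variable {n : ℕ} {G : SimpleGraph (Fin n)}

lemma dist_le_eccentricity (v u : Fin n) : G.dist v u ≤ eccentricity G v :=
  le_sup (f := fun u => G.dist v u) (mem_univ u)

lemma dist_le_eccentricity_right (u v : Fin n) : G.dist u v ≤ eccentricity G v :=
  dist_comm (u := u) ▸ dist_le_eccentricity v u

lemma transmission_eq_sum_erase (v : Fin n) :
    transmission G v = ∑ u ∈ univ.erase v, G.dist v u := by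
  rw [transmission, ← add_sum_erase _ _ (mem_univ v), dist_self, zero_add]

lemma card_univ_erase (v : Fin n) : (univ.erase v).card = n - 1 := by
  rw [card_erase_of_mem (mem_univ v), card_univ, Fintype.card_fin]

lemma transmission_le_mul_eccentricity (v : Fin n) :
    transmission G v ≤ (n - 1) * eccentricity G v := by
  rw [transmission_eq_sum_erase, ← card_univ_erase v, ← smul_eq_mul, ← sum_const]
  exact sum_le_sum fun u _ => dist_le_eccentricity v u


lemma transmission_add_eccentricity_le_sum (v : Fin n) :
    transmission G v + eccentricity G v ≤ ∑ u, eccentricity G u := by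
  rw [transmission_eq_sum_erase, ← add_sum_erase _ _ (mem_univ v), add_comm]
  exact Nat.add_le_add_left (sum_le_sum fun u _ => dist_le_eccentricity_right v u) _

lemma card_mul_transmission_le (v : Fin n) :
    n * transmission G v ≤ (n - 1) * ∑ u, eccentricity G u := by
  have h₁ := transmission_le_mul_eccentricity (G := G) v
  have h₂ := transmission_add_eccentricity_le_sum (G := G) v
  obtain ⟨m, rfl⟩ : ∃ m, n = m + 1 := ⟨n - 1, by have := v.pos; omega⟩
  rw [Nat.add_sub_cancel] at h₁ ⊢
  nlinarith

lemma dist_eq_eccentricity_of_transmission_eq {v : Fin n}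
    (h : transmission G v = (n - 1) * eccentricity G v) {u : Fin n} (hu : u ≠ v) :
    G.dist v u = eccentricity G v := by
  rw [transmission_eq_sum_erase, ← card_univ_erase v, ← smul_eq_mul, ← sum_const] at h
  exact (sum_eq_sum_iff_of_le fun u _ => dist_le_eccentricity v u).mp h u
    (mem_erase.mpr ⟨hu, mem_univ u⟩)

lemma dist_eq_eccentricity_of_transmission_add_eq {v : Fin n}
    (h : transmission G v + eccentricity G v = ∑ u, eccentricity G u) {u : Fin n} (hu : u ≠ v) :
    G.dist v u = eccentricity G u := by
  rw [transmission_eq_sum_erase, ← add_sum_erase _ _ (mem_univ v), add_comm,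
    Nat.add_left_cancel_iff] at h
  exact (sum_eq_sum_iff_of_le fun u _ => dist_le_eccentricity_right v u).mp h u
    (mem_erase.mpr ⟨hu, mem_univ u⟩)

lemma eq_top_of_eccentricity_le_one (hG : G.Connected) (h : ∀ u, eccentricity G u ≤ 1) :
    G = ⊤ := by
  ext a b
  refine ⟨Adj.ne, fun hab => dist_eq_one_iff_adj.mp ?_⟩
  have := (dist_le_eccentricity a b).trans (h a)
  have := hG.pos_dist_of_ne hab
  omega

lemma eq_top_of_card_mul_transmission_eq (hG : G.Connected) (hn : 2 ≤ n) {v : Fin n}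
    (h : n * transmission G v = (n - 1) * ∑ u, eccentricity G u) : G = ⊤ := by
  have h₁ := transmission_le_mul_eccentricity (G := G) v
  have h₂ := transmission_add_eccentricity_le_sum (G := G) v
  obtain ⟨m, rfl⟩ : ∃ m, n = m + 1 := ⟨n - 1, by have := v.pos; omega⟩
  rw [Nat.add_sub_cancel] at h₁ h
  have e₁ : transmission G v = m * eccentricity G v := by nlinarith
  have e₂ : transmission G v + eccentricity G v = ∑ u, eccentricity G u := by nlinarith
  have : Nontrivial (Fin (m + 1)) := Fin.nontrivial_iff_two_le.mpr hn
  obtain ⟨w, hvw⟩ := hG.preconnected.exists_adj_of_nontrivial v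
  have hv : eccentricity G v = 1 :=
    (dist_eq_eccentricity_of_transmission_eq e₁ hvw.ne').symm.trans (dist_eq_one_iff_adj.mpr hvw)
  refine eq_top_of_eccentricity_le_one hG fun u => ?_
  rcases eq_or_ne u v with rfl | hu
  · exact hv.le
  · rw [← dist_eq_eccentricity_of_transmission_add_eq e₂ hu,
      dist_eq_eccentricity_of_transmission_eq e₁ hu, hv]

end

lemma transmission_top {n : ℕ} (v : Fin n) :
    transmission (⊤ : SimpleGraph (Fin n)) v = n - 1 := by
  rw [transmission_eq_sum_erase,
    sum_congr rfl fun u hu => dist_top_of_ne (ne_of_mem_erase hu).symm, sum_const,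
    card_univ_erase, smul_eq_mul, mul_one]

lemma eccentricity_top {n : ℕ} (hn : 2 ≤ n) (v : Fin n) :
    eccentricity (⊤ : SimpleGraph (Fin n)) v = 1 := by
  have : Nontrivial (Fin n) := Fin.nontrivial_iff_two_le.mpr hn
  obtain ⟨u, hu⟩ := exists_ne v
  refine le_antisymm (Finset.sup_le fun w _ => ?_)
    (dist_top_of_ne hu.symm ▸ dist_le_eccentricity v u)
  rw [dist_top]
  split_ifs <;> simp

lemma exists_remoteness_eq {n : ℕ} [NeZero n] (G : SimpleGraph (Fin n)) :
    ∃ v, remoteness G = transmission G v / (n - 1) := by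
  have hfin : {x : ℝ | ∃ v : Fin n, x = transmission G v}.Finite :=
    (Set.finite_range fun v => (transmission G v : ℝ)).subset fun _ ⟨v, hv⟩ => ⟨v, hv.symm⟩
  have hne : {x : ℝ | ∃ v : Fin n, x = transmission G v}.Nonempty := ⟨_, 0, rfl⟩
  obtain ⟨v, hv⟩ := hne.csSup_mem hfin
  exact ⟨v, by rw [remoteness, hv]⟩

theorem remoteness_le_avgEcc {n : ℕ} (hn : 3 ≤ n) (G : SimpleGraph (Fin n))
    (hG : G.Connected) :
    remoteness G ≤ avgEcc G ∧ (remoteness G = avgEcc G ↔ G = ⊤) := by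
  have : NeZero n := ⟨by omega⟩
  obtain ⟨v, hv⟩ := exists_remoteness_eq G
  have hcast : ((n - 1 : ℕ) : ℝ) = n - 1 := Nat.cast_pred (by omega)
  have hn₁ : (0 : ℝ) < n - 1 := by
    rw [← hcast]
    exact_mod_cast (by omega : 0 < n - 1)
  have hn₀ : (0 : ℝ) < n := by linarith
  have key : (n : ℝ) * transmission G v ≤ (n - 1) * ∑ u, (eccentricity G u : ℝ) := by
    rw [← hcast]
    exact_mod_cast card_mul_transmission_le v
  rw [hv, avgEcc, div_le_div_iff₀ hn₁ hn₀, div_eq_div_iff hn₁.ne' hn₀.ne']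
  refine ⟨by linarith, fun h => eq_top_of_card_mul_transmission_eq hG (by omega) (v := v) ?_, ?_⟩
  · have : (n : ℝ) * transmission G v = ((n - 1 : ℕ) : ℝ) * ∑ u, (eccentricity G u : ℝ) := by
      rw [hcast]
      linarith
    exact_mod_cast this
  · rintro rfl
    simp only [transmission_top, eccentricity_top (by omega : 2 ≤ n), sum_const, card_univ,
      Fintype.card_fin, hcast, nsmul_eq_mul, Nat.cast_one]
    ring
end

section
/- For every connected graph G on n ≥ 2 vertices, π(G)/l̄(G) ≥ n/(2(n-1)), with equality if and only if G is the star S_n. -/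
open SimpleGraph Finset

/-- The average distance between (ordered) pairs of distinct vertices. -/
noncomputable def avgDist {n : ℕ} (G : SimpleGraph (Fin n)) : ℝ :=
  (∑ u, ∑ v, (G.dist u v : ℝ)) / (n * (n - 1))

/-- `G` is a star: there is a center adjacent to all other vertices and no further edges. -/
def IsStar {n : ℕ} (G : SimpleGraph (Fin n)) : Prop :=
  ∃ c : Fin n, ∀ u v : Fin n, G.Adj u v ↔ u ≠ v ∧ (u = c ∨ v = c)

private lemma transmission_ge {n : ℕ} {G : SimpleGraph (Fin n)} (hG : G.Connected)
    (u : Fin n) : n - 1 ≤ transmission G u := by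
  have h1 : ∀ v ∈ Finset.univ.erase u, 1 ≤ G.dist u v := fun v hv =>
    hG.pos_dist_of_ne (Finset.ne_of_mem_erase hv).symm
  calc n - 1 = ∑ _v ∈ Finset.univ.erase u, 1 := by
        simp [Finset.card_erase_of_mem]
    _ ≤ ∑ v ∈ Finset.univ.erase u, G.dist u v := Finset.sum_le_sum h1
    _ ≤ ∑ v, G.dist u v :=
        Finset.sum_le_sum_of_subset (Finset.erase_subset _ _)
    _ = transmission G u := rfl

private lemma sum_erase_dist {n : ℕ} (G : SimpleGraph (Fin n)) (m : Fin n) :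
    ∑ u ∈ Finset.univ.erase m, G.dist m u = transmission G m := by
  rw [transmission, ← Finset.sum_erase_add _ _ (Finset.mem_univ m)]
  simp

private lemma sum_erase_dist' {n : ℕ} (G : SimpleGraph (Fin n)) (m : Fin n) :
    ∑ u ∈ Finset.univ.erase m, G.dist u m = transmission G m := by
  rw [← sum_erase_dist G m]
  exact Finset.sum_congr rfl fun u _ => SimpleGraph.dist_comm ..

/-- Decomposition of the total distance sum. -/
private lemma T_split {n : ℕ} (G : SimpleGraph (Fin n)) (m : Fin n) :
    ∑ u, ∑ v, G.dist u v
      = 2 * transmission G m +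
        ∑ u ∈ Finset.univ.erase m, ∑ v ∈ Finset.univ.erase m, G.dist u v := by
  rw [← Finset.sum_erase_add _ _ (Finset.mem_univ m)]
  have h1 : ∀ u, ∑ v, G.dist u v
      = (∑ v ∈ Finset.univ.erase m, G.dist u v) + G.dist u m := by
    intro u
    rw [← Finset.sum_erase_add _ _ (Finset.mem_univ m)]
  have h2 : (∑ v, G.dist m v) = transmission G m := rfl
  rw [h2]
  have h3 : ∑ u ∈ Finset.univ.erase m, ∑ v, G.dist u v
      = (∑ u ∈ Finset.univ.erase m, ∑ v ∈ Finset.univ.erase m, G.dist u v)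
        + transmission G m := by
    rw [← sum_erase_dist' G m, ← Finset.sum_add_distrib]
    exact Finset.sum_congr rfl fun u _ => h1 u
  rw [h3]; ring

/-- The key inequality and its equality condition. -/
private lemma key {n : ℕ} {G : SimpleGraph (Fin n)} (hG : G.Connected) (m : Fin n) :
    (∑ u, ∑ v, G.dist u v) ≤ 2 * (n - 1) * transmission G m ∧
    ((∑ u, ∑ v, G.dist u v) = 2 * (n - 1) * transmission G m ↔
      ∀ u ∈ Finset.univ.erase m, ∀ v ∈ Finset.univ.erase m, u ≠ v →
        G.dist u v = G.dist u m + G.dist m v) := by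
  classical
  have hcard : (Finset.univ.erase m).card = n - 1 := by
    simp [Finset.card_erase_of_mem]
  -- pointwise bound
  have hpt : ∀ u ∈ Finset.univ.erase m, ∀ v ∈ Finset.univ.erase m,
      G.dist u v + (if v = u then 2 * G.dist u m else 0)
        ≤ G.dist u m + G.dist m v := by
    intro u hu v hv
    by_cases hvu : v = u
    · subst hvu
      have h1 : G.dist v v = 0 := SimpleGraph.dist_self
      have h2 : G.dist m v = G.dist v m := SimpleGraph.dist_comm
      rw [if_pos rfl, h1, h2]
      omega
    · simp only [if_neg hvu]
      simpa using hG.dist_triangle (u := u) (v := m) (w := v)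
  -- inner sums
  have hinner_l : ∀ u ∈ Finset.univ.erase m,
      ∑ v ∈ Finset.univ.erase m, (G.dist u v + (if v = u then 2 * G.dist u m else 0))
        = (∑ v ∈ Finset.univ.erase m, G.dist u v) + 2 * G.dist u m := by
    intro u hu
    rw [Finset.sum_add_distrib,
      Finset.sum_ite_eq' (Finset.univ.erase m) u (fun _ => 2 * G.dist u m),
      if_pos hu]
  have hinner_r : ∀ u ∈ Finset.univ.erase m,
      ∑ v ∈ Finset.univ.erase m, (G.dist u m + G.dist m v)
        = (n - 1) * G.dist u m + transmission G m := by
    intro u _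
    rw [Finset.sum_add_distrib, Finset.sum_const, hcard, smul_eq_mul,
      sum_erase_dist G m]
  -- outer sums
  have houter_l :
      ∑ u ∈ Finset.univ.erase m, ((∑ v ∈ Finset.univ.erase m, G.dist u v) + 2 * G.dist u m)
        = (∑ u ∈ Finset.univ.erase m, ∑ v ∈ Finset.univ.erase m, G.dist u v)
          + 2 * transmission G m := by
    rw [Finset.sum_add_distrib, ← Finset.mul_sum, sum_erase_dist' G m]
  have houter_r :
      ∑ u ∈ Finset.univ.erase m, ((n - 1) * G.dist u m + transmission G m)
        = 2 * (n - 1) * transmission G m := by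
    rw [Finset.sum_add_distrib, ← Finset.mul_sum, Finset.sum_const, hcard,
      smul_eq_mul, sum_erase_dist' G m]
    ring
  have hFle : ∀ u ∈ Finset.univ.erase m,
      ∑ v ∈ Finset.univ.erase m, (G.dist u v + (if v = u then 2 * G.dist u m else 0))
        ≤ ∑ v ∈ Finset.univ.erase m, (G.dist u m + G.dist m v) := by
    intro u hu
    exact Finset.sum_le_sum (fun v hv => hpt u hu v hv)
  have hsum_le :
      (∑ u ∈ Finset.univ.erase m, ∑ v ∈ Finset.univ.erase m, G.dist u v)
        + 2 * transmission G m ≤ 2 * (n - 1) * transmission G m := by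
    calc (∑ u ∈ Finset.univ.erase m, ∑ v ∈ Finset.univ.erase m, G.dist u v)
          + 2 * transmission G m
        = ∑ u ∈ Finset.univ.erase m, ∑ v ∈ Finset.univ.erase m,
            (G.dist u v + (if v = u then 2 * G.dist u m else 0)) := by
          rw [Finset.sum_congr rfl hinner_l, houter_l]
      _ ≤ ∑ u ∈ Finset.univ.erase m, ∑ v ∈ Finset.univ.erase m,
            (G.dist u m + G.dist m v) :=
          Finset.sum_le_sum hFle
      _ = 2 * (n - 1) * transmission G m := by
          rw [Finset.sum_congr rfl hinner_r, houter_r]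
  have hT := T_split G m
  constructor
  · omega
  · have hiff :
        (∑ u, ∑ v, G.dist u v) = 2 * (n - 1) * transmission G m ↔
        ∑ u ∈ Finset.univ.erase m, ∑ v ∈ Finset.univ.erase m,
            (G.dist u v + (if v = u then 2 * G.dist u m else 0))
          = ∑ u ∈ Finset.univ.erase m, ∑ v ∈ Finset.univ.erase m,
            (G.dist u m + G.dist m v) := by
      rw [Finset.sum_congr rfl hinner_l, houter_l,
        Finset.sum_congr rfl hinner_r, houter_r]
      omega
    rw [hiff, Finset.sum_eq_sum_iff_of_le hFle]
    constructor
    · intro h u hu v hv huv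
      have h2 := (Finset.sum_eq_sum_iff_of_le (fun v hv => hpt u hu v hv)).mp
        (h u hu) v hv
      rw [if_neg (Ne.symm huv)] at h2
      omega
    · intro h u hu
      apply (Finset.sum_eq_sum_iff_of_le (fun v hv => hpt u hu v hv)).mpr
      intro v hv
      by_cases hvu : v = u
      · subst hvu
        have h1 : G.dist v v = 0 := SimpleGraph.dist_self
        have h2 : G.dist m v = G.dist v m := SimpleGraph.dist_comm
        rw [if_pos rfl, h1, h2]
        omega
      · rw [if_neg hvu]
        have := h u hu v hv (Ne.symm hvu)
        omega

/-- Equality in the key inequality implies `G` is a star with center `m`. -/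
private lemma eq_imp_star {n : ℕ} {G : SimpleGraph (Fin n)} (hG : G.Connected)
    (m : Fin n)
    (h : ∀ u ∈ Finset.univ.erase m, ∀ v ∈ Finset.univ.erase m, u ≠ v →
      G.dist u v = G.dist u m + G.dist m v) :
    ∀ u v : Fin n, G.Adj u v ↔ u ≠ v ∧ (u = m ∨ v = m) := by
  have noedge : ∀ u v : Fin n, u ≠ m → v ≠ m → ¬ G.Adj u v := by
    intro u v hu hv hadj
    have huv : u ≠ v := hadj.ne
    have hd := h u (Finset.mem_erase.mpr ⟨hu, Finset.mem_univ _⟩)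
      v (Finset.mem_erase.mpr ⟨hv, Finset.mem_univ _⟩) huv
    have h1 : G.dist u v = 1 := SimpleGraph.dist_eq_one_iff_adj.mpr hadj
    have h2 : 0 < G.dist u m := hG.pos_dist_of_ne hu
    have h3 : 0 < G.dist m v := hG.pos_dist_of_ne (Ne.symm hv)
    omega
  have claim : ∀ w : Fin n, w ≠ m → G.Adj w m := by
    intro w hw
    obtain ⟨p⟩ := hG.preconnected w m
    cases p with
    | nil => exact absurd rfl hw
    | @cons _ x _ hadj q =>
      by_cases hx : x = m
      · exact hx ▸ hadj
      · exact absurd hadj (noedge w x hw hx)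
  intro u v
  constructor
  · intro hadj
    refine ⟨hadj.ne, ?_⟩
    by_contra hc
    push_neg at hc
    exact noedge u v hc.1 hc.2 hadj
  · rintro ⟨huv, hm | hm⟩
    · subst hm
      exact (claim v (Ne.symm huv)).symm
    · subst hm
      exact claim u huv

private lemma star_dist_center {n : ℕ} {G : SimpleGraph (Fin n)} {c : Fin n}
    (hc : ∀ u v : Fin n, G.Adj u v ↔ u ≠ v ∧ (u = c ∨ v = c)) {v : Fin n}
    (hv : v ≠ c) : G.dist c v = 1 :=
  SimpleGraph.dist_eq_one_iff_adj.mpr ((hc c v).mpr ⟨Ne.symm hv, Or.inl rfl⟩)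

private lemma star_dist_leaf {n : ℕ} {G : SimpleGraph (Fin n)} (hG : G.Connected)
    {c : Fin n} (hc : ∀ u v : Fin n, G.Adj u v ↔ u ≠ v ∧ (u = c ∨ v = c))
    {u v : Fin n} (hu : u ≠ c) (hv : v ≠ c) (huv : u ≠ v) : G.dist u v = 2 := by
  have hadj1 : G.Adj u c := (hc u c).mpr ⟨hu, Or.inr rfl⟩
  have hadj2 : G.Adj c v := (hc c v).mpr ⟨Ne.symm hv, Or.inl rfl⟩
  have h2 : G.dist u v ≤ 2 := by
    have := SimpleGraph.dist_le (SimpleGraph.Walk.cons hadj1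
      (SimpleGraph.Walk.cons hadj2 SimpleGraph.Walk.nil))
    simpa using this
  have h0 : G.dist u v ≠ 0 := (hG.pos_dist_of_ne huv).ne'
  have h1 : G.dist u v ≠ 1 := by
    intro h
    rcases (hc u v).mp (SimpleGraph.dist_eq_one_iff_adj.mp h) with ⟨_, h | h⟩
    · exact hu h
    · exact hv h
  omega

private lemma star_transmission_center {n : ℕ} {G : SimpleGraph (Fin n)}
    {c : Fin n} (hc : ∀ u v : Fin n, G.Adj u v ↔ u ≠ v ∧ (u = c ∨ v = c)) :
    transmission G c = n - 1 := by
  have hval : ∀ v : Fin n, G.dist c v + (if v = c then 1 else 0) = 1 := by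
    intro v
    by_cases hv : v = c
    · subst hv; simp
    · rw [star_dist_center hc hv, if_neg hv]
  have hsum : ∑ v : Fin n, (G.dist c v + (if v = c then 1 else 0)) = n := by
    rw [Finset.sum_congr rfl (fun v _ => hval v)]
    simp
  rw [Finset.sum_add_distrib, Finset.sum_ite_eq' Finset.univ c (fun _ => 1),
    if_pos (Finset.mem_univ c)] at hsum
  have : transmission G c = ∑ v : Fin n, G.dist c v := rfl
  omega

private lemma star_transmission_leaf {n : ℕ} {G : SimpleGraph (Fin n)}
    (hG : G.Connected) {c : Fin n}
    (hc : ∀ u v : Fin n, G.Adj u v ↔ u ≠ v ∧ (u = c ∨ v = c))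
    {u : Fin n} (hu : u ≠ c) : transmission G u = 2 * n - 3 := by
  have hn2 : 2 ≤ n := by
    have : (Finset.univ : Finset (Fin n)).card = n := by simp
    have hcard : ({u, c} : Finset (Fin n)).card = 2 := by
      rw [Finset.card_insert_of_notMem (by simp [hu]), Finset.card_singleton]
    calc 2 = ({u, c} : Finset (Fin n)).card := hcard.symm
      _ ≤ (Finset.univ : Finset (Fin n)).card := Finset.card_le_card (by simp)
      _ = n := by simp
  have hval : ∀ v : Fin n,
      G.dist u v + (if v = u then 2 else 0) + (if v = c then 1 else 0) = 2 := by
    intro v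
    by_cases hvu : v = u
    · subst hvu
      simp [hu, SimpleGraph.dist_self]
    · by_cases hvc : v = c
      · subst hvc
        rw [if_neg hvu, if_pos rfl]
        have : G.dist u v = 1 := by
          rw [SimpleGraph.dist_comm]
          exact star_dist_center hc hu
        omega
      · rw [if_neg hvu, if_neg hvc]
        have : G.dist u v = 2 :=
          star_dist_leaf hG hc hu hvc (Ne.symm hvu)
        omega
  have hsum : ∑ v : Fin n,
      (G.dist u v + (if v = u then 2 else 0) + (if v = c then 1 else 0)) = 2 * n := by
    rw [Finset.sum_congr rfl (fun v _ => hval v)]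
    simp [mul_comm]
  rw [Finset.sum_add_distrib, Finset.sum_add_distrib,
    Finset.sum_ite_eq' Finset.univ u (fun _ => 2),
    Finset.sum_ite_eq' Finset.univ c (fun _ => 1),
    if_pos (Finset.mem_univ u), if_pos (Finset.mem_univ c)] at hsum
  have : transmission G u = ∑ v : Fin n, G.dist u v := rfl
  omega

private lemma star_T {n : ℕ} {G : SimpleGraph (Fin n)} (hn : 2 ≤ n)
    (hG : G.Connected) {c : Fin n}
    (hc : ∀ u v : Fin n, G.Adj u v ↔ u ≠ v ∧ (u = c ∨ v = c)) :
    (∑ u, ∑ v, G.dist u v) = 2 * (n - 1) * (n - 1) := by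
  have hval : ∀ u : Fin n,
      transmission G u + (if u = c then n - 2 else 0) = 2 * n - 3 := by
    intro u
    by_cases huc : u = c
    · subst huc
      rw [star_transmission_center hc, if_pos rfl]
      omega
    · rw [star_transmission_leaf hG hc huc, if_neg huc]
      omega
  have hsum : ∑ u : Fin n, (transmission G u + (if u = c then n - 2 else 0))
      = n * (2 * n - 3) := by
    rw [Finset.sum_congr rfl (fun u _ => hval u)]
    simp [mul_comm]
  rw [Finset.sum_add_distrib, Finset.sum_ite_eq' Finset.univ c (fun _ => n - 2),
    if_pos (Finset.mem_univ c)] at hsum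
  have hT : (∑ u, ∑ v, G.dist u v) = ∑ u : Fin n, transmission G u := by
    exact Finset.sum_congr rfl (fun u _ => rfl)
  rw [hT]
  obtain ⟨k, rfl⟩ := Nat.exists_eq_add_of_le hn
  have e1 : 2 * (2 + k) - 3 = 2 * k + 1 := by omega
  rw [e1] at hsum
  have e2 : (2 + k) * (2 * k + 1) = 2 * k * k + 5 * k + 2 := by ring
  rw [e2] at hsum
  have e3 : 2 * ((2 + k) - 1) * ((2 + k) - 1) = 2 * k * k + 4 * k + 2 := by
    have h4 : (2 + k) - 1 = k + 1 := by omega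
    rw [h4]; ring
  rw [e3]
  omega

theorem proximity_div_avgDist {n : ℕ} (hn : 2 ≤ n) (G : SimpleGraph (Fin n))
    (hG : G.Connected) :
    n / (2 * (n - 1)) ≤ proximity G / avgDist G ∧
      (proximity G / avgDist G = n / (2 * (n - 1)) ↔ IsStar G) := by
  classical
  obtain ⟨m, -, hm⟩ := Finset.exists_min_image Finset.univ (transmission G)
    ⟨⟨0, by omega⟩, Finset.mem_univ _⟩
  set tm : ℕ := transmission G m with htm
  set T : ℕ := ∑ u, ∑ v, G.dist u v with hT
  -- proximity = tm / (n - 1)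
  have hprox : proximity G = (tm : ℝ) / ((n : ℝ) - 1) := by
    have hleast : IsLeast {x : ℝ | ∃ v : Fin n, x = transmission G v} (tm : ℝ) := by
      constructor
      · exact ⟨m, rfl⟩
      · rintro x ⟨v, rfl⟩
        exact_mod_cast hm v (Finset.mem_univ v)
    rw [proximity, hleast.csInf_eq]
  have havg : avgDist G = (T : ℝ) / ((n : ℝ) * ((n : ℝ) - 1)) := by
    rw [avgDist, hT]
    push_cast
    ring_nf
  have hn1 : (0 : ℝ) < (n : ℝ) - 1 := by
    have : (2 : ℝ) ≤ (n : ℝ) := by exact_mod_cast hn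
    linarith
  have hnpos : (0 : ℝ) < (n : ℝ) := by positivity
  have hn0 : 0 < n := by omega
  have hn1' : 1 < n := by omega
  have hTpos : 0 < T := by
    have hab : (⟨0, hn0⟩ : Fin n) ≠ ⟨1, hn1'⟩ := by
      simp [Fin.ext_iff]
    have h1 : 0 < G.dist ⟨0, hn0⟩ ⟨1, hn1'⟩ := hG.pos_dist_of_ne hab
    have h2 : G.dist ⟨0, hn0⟩ ⟨1, hn1'⟩ ≤ ∑ v, G.dist ⟨0, hn0⟩ v :=
      Finset.single_le_sum (f := fun v => G.dist ⟨0, hn0⟩ v)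
        (fun _ _ => Nat.zero_le _) (Finset.mem_univ _)
    have h3 : ∑ v, G.dist ⟨0, hn0⟩ v ≤ ∑ u, ∑ v, G.dist u v :=
      Finset.single_le_sum (f := fun u => ∑ v, G.dist u v)
        (fun _ _ => Nat.zero_le _) (Finset.mem_univ _)
    omega
  have hTpos' : (0 : ℝ) < (T : ℝ) := by exact_mod_cast hTpos
  have htmpos : 0 < tm := by
    have := transmission_ge hG m
    omega
  have htmpos' : (0 : ℝ) < (tm : ℝ) := by exact_mod_cast htmpos
  have hratio : proximity G / avgDist G = (tm : ℝ) * (n : ℝ) / (T : ℝ) := by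
    rw [hprox, havg]
    field_simp
  have hkey := key hG m
  have hcast : ((2 * (n - 1) * tm : ℕ) : ℝ) = 2 * ((n : ℝ) - 1) * (tm : ℝ) := by
    push_cast [Nat.cast_sub (show 1 ≤ n by omega)]
    ring
  have hineqR : (T : ℝ) ≤ 2 * ((n : ℝ) - 1) * (tm : ℝ) := by
    rw [← hcast]
    exact_mod_cast hkey.1
  constructor
  · rw [hratio, div_le_div_iff₀ (by positivity) (by positivity)]
    nlinarith
  · rw [hratio]
    have hiff1 : (tm : ℝ) * (n : ℝ) / (T : ℝ) = (n : ℝ) / (2 * ((n : ℝ) - 1)) ↔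
        (T : ℝ) = 2 * ((n : ℝ) - 1) * (tm : ℝ) := by
      rw [div_eq_div_iff hTpos'.ne' (by positivity)]
      constructor
      · intro h
        have := mul_left_cancel₀ hnpos.ne'
          (show (n : ℝ) * (2 * ((n : ℝ) - 1) * (tm : ℝ)) = (n : ℝ) * (T : ℝ) by
            linarith [h])
        linarith
      · intro h
        rw [h]; ring
    rw [hiff1]
    have hiff2 : (T : ℝ) = 2 * ((n : ℝ) - 1) * (tm : ℝ) ↔
        T = 2 * (n - 1) * tm := by
      rw [← hcast]
      exact_mod_cast Iff.rfl
    rw [hiff2]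
    constructor
    · intro h
      exact ⟨m, eq_imp_star hG m (hkey.2.mp h)⟩
    · rintro ⟨c, hc⟩
      have hTc : T = 2 * (n - 1) * (n - 1) := star_T hn hG hc
      have htmval : tm = n - 1 := by
        have h1 := hm c (Finset.mem_univ c)
        rw [star_transmission_center hc] at h1
        have h2 := transmission_ge hG m
        omega
      rw [hTc, htmval]
end

section
/- For every connected graph G on n ≥ 3 vertices with clique number ω, the remoteness satisfies ρ(G) ≤ (n² - ω² - n + 3ω - 2)/(2(n-1)), with equality if and only if G is the kite KI_{n,ω}. -/
open SimpleGraph Finset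

/-- The kite `KI_{n,ω}`: a clique on the first `ω` vertices together with a path on the
remaining `n - ω` vertices, with one endpoint of the path joined to one vertex of the clique. -/
def kite (n ω : ℕ) : SimpleGraph (Fin n) :=
  SimpleGraph.fromRel (fun i j => (i.val < ω ∧ j.val < ω) ∨ (j.val = i.val + 1 ∧ ω ≤ j.val))


set_option maxHeartbeats 1000000

lemma step_down {V : Type*} {G : SimpleGraph V} (hG : G.Connected) {v w : V} {k : ℕ}
    (h : G.dist v w = k + 1) : ∃ x, G.Adj x w ∧ G.dist v x = k := by
  have hr : G.Reachable v w := by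
    apply Reachable.of_dist_ne_zero; omega
  obtain ⟨p, hp⟩ := hr.exists_walk_length_eq_dist
  rw [h] at hp
  cases hq : p.reverse with
  | nil => exfalso; have := congrArg SimpleGraph.Walk.length hq; simp [hp] at this
  | cons ha q =>
    rename_i x
    have hl : q.length = k := by
      have := congrArg SimpleGraph.Walk.length hq
      simp [hp] at this; omega
    refine ⟨x, ha.symm, le_antisymm ?_ ?_⟩
    · have := SimpleGraph.dist_le q.reverse
      simpa [hl] using this
    · have htr := hG.dist_triangle (u := v) (v := x) (w := w)
      have : G.dist x w = 1 := by rw [SimpleGraph.dist_eq_one_iff_adj]; exact ha.symm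
      omega

lemma exists_level {V : Type*} {G : SimpleGraph V} (hG : G.Connected) {v u : V} {i : ℕ}
    (hi : i ≤ G.dist v u) : ∃ w, G.dist v w = i := by
  obtain ⟨k, hk⟩ : ∃ k, G.dist v u = i + k := ⟨G.dist v u - i, by omega⟩
  clear hi
  induction k generalizing u with
  | zero => exact ⟨u, by omega⟩
  | succ k ih =>
    obtain ⟨x, _, hx⟩ := step_down hG (k := i + k) (by omega : G.dist v u = (i + k) + 1)
    exact ih hx

lemma lipschitz_walk {V : Type*} {G : SimpleGraph V} (h : V → ℕ)
    (hh : ∀ x y, G.Adj x y → h y ≤ h x + 1) {v u : V} (p : G.Walk v u) :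
    h u ≤ h v + p.length := by
  induction p with
  | nil => simp
  | cons ha q ih =>
    have := hh _ _ ha
    simp only [SimpleGraph.Walk.length_cons]
    omega

lemma lipschitz_dist {V : Type*} {G : SimpleGraph V} (hG : G.Connected) (h : V → ℕ)
    (hh : ∀ x y, G.Adj x y → h y ≤ h x + 1) (v u : V) :
    h u ≤ h v + G.dist v u := by
  obtain ⟨p, hp⟩ := hG.exists_walk_length_eq_dist v u
  simpa [hp] using lipschitz_walk h hh p

lemma dist_iso {V W : Type*} {G : SimpleGraph V} {H : SimpleGraph W} (φ : G ≃g H)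
    (u v : V) : H.dist (φ u) (φ v) = G.dist u v := by
  apply le_antisymm
  · by_cases hr : G.Reachable u v
    · obtain ⟨p, hp⟩ := hr.exists_walk_length_eq_dist
      have := SimpleGraph.dist_le (p.map φ.toHom)
      simpa [hp] using this
    · simp [SimpleGraph.dist_eq_zero_of_not_reachable hr,
            SimpleGraph.dist_eq_zero_of_not_reachable
              (fun h => hr (SimpleGraph.Iso.reachable_iff.mp h))]
  · by_cases hr : H.Reachable (φ u) (φ v)
    · obtain ⟨p, hp⟩ := hr.exists_walk_length_eq_dist
      have := SimpleGraph.dist_le ((p.map φ.symm.toHom).copy (show φ.symm (φ u) = u by simp) (show φ.symm (φ v) = v by simp))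
      simpa [hp] using this
    · have : ¬ G.Reachable u v := fun h => hr (SimpleGraph.Iso.reachable_iff.mpr h)
      simp [SimpleGraph.dist_eq_zero_of_not_reachable this]


lemma cliqueNum_le_iso {V W : Type*} [Fintype V] [Fintype W] {G : SimpleGraph V}
    {H : SimpleGraph W} (φ : G ≃g H) : G.cliqueNum ≤ H.cliqueNum := by
  classical
  obtain ⟨s, hs⟩ := G.exists_isNClique_cliqueNum
  have hcl : H.IsClique (s.image φ) := by
    intro x hx y hy hne
    simp only [Finset.coe_image, Set.mem_image, Finset.mem_coe] at hx hy
    obtain ⟨a, ha, rfl⟩ := hx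
    obtain ⟨b, hb, rfl⟩ := hy
    have hab : a ≠ b := fun h => hne (by rw [h])
    exact φ.map_adj_iff.mpr (hs.isClique ha hb hab)
  have hcard : #(s.image φ) = G.cliqueNum := by
    rw [Finset.card_image_of_injective _ (RelIso.injective φ), hs.card_eq]
  have := SimpleGraph.IsClique.card_le_cliqueNum (tc := hcl)
  rwa [hcard] at this

lemma cliqueNum_iso {V W : Type*} [Fintype V] [Fintype W] {G : SimpleGraph V}
    {H : SimpleGraph W} (φ : G ≃g H) : G.cliqueNum = H.cliqueNum :=
  le_antisymm (cliqueNum_le_iso φ) (cliqueNum_le_iso φ.symm)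

lemma sum_eq_sum_card {m : ℕ} (f : Fin m → ℕ) (N : ℕ) (hf : ∀ a, f a < N) :
    ∑ a, f a = ∑ i ∈ Finset.range N, #(Finset.univ.filter (fun a => i < f a)) := by
  have h1 : ∀ a : Fin m, f a = ∑ i ∈ Finset.range N, if i < f a then 1 else 0 := by
    intro a
    rw [Finset.sum_boole]
    have : (Finset.range N).filter (fun i => i < f a) = Finset.range (f a) := by
      ext i
      simp only [Finset.mem_filter, Finset.mem_range]
      have := hf a; omega
    rw [this]; simp
  calc ∑ a, f a = ∑ a, ∑ i ∈ Finset.range N, if i < f a then 1 else 0 := by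
        exact Finset.sum_congr rfl (fun a _ => h1 a)
    _ = ∑ i ∈ Finset.range N, ∑ a, if i < f a then 1 else 0 := Finset.sum_comm
    _ = ∑ i ∈ Finset.range N, #(Finset.univ.filter (fun a => i < f a)) := by
        refine Finset.sum_congr rfl (fun i _ => ?_)
        rw [Finset.sum_boole]; simp


lemma two_le_cliqueNum {n : ℕ} (hn : 3 ≤ n) (G : SimpleGraph (Fin n)) (hG : G.Connected) :
    2 ≤ G.cliqueNum ∧ G.cliqueNum ≤ n := by
  classical
  obtain ⟨K, hK⟩ := G.exists_isNClique_cliqueNum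
  constructor
  · have hv2 : (⟨0, by omega⟩ : Fin n) ≠ ⟨1, by omega⟩ := by
      intro h; exact absurd (congrArg Fin.val h) (by simp)
    have hd1 : 1 ≤ G.dist ⟨0, by omega⟩ ⟨1, by omega⟩ := hG.pos_dist_of_ne hv2
    obtain ⟨k, hk⟩ : ∃ k, G.dist (⟨0, by omega⟩ : Fin n) ⟨1, by omega⟩ = k + 1 :=
      ⟨G.dist ⟨0, by omega⟩ ⟨1, by omega⟩ - 1, by omega⟩
    obtain ⟨x, hadj, -⟩ := step_down hG hk
    have hcl : G.IsClique {x, (⟨1, by omega⟩ : Fin n)} := by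
      rw [SimpleGraph.isClique_pair]; exact fun _ => hadj
    have hcl' : G.IsClique (({x, ⟨1, by omega⟩} : Finset (Fin n)) : Set (Fin n)) := by
      simpa using hcl
    have := SimpleGraph.IsClique.card_le_cliqueNum
      (t := ({x, ⟨1, by omega⟩} : Finset (Fin n))) (tc := hcl')
    rwa [Finset.card_pair (G.ne_of_adj hadj)] at this
  · have := Finset.card_le_univ K
    simp only [hK.card_eq] at this
    simpa using this


/-- level function on the kite, measured from vertex `n-1`. -/
def klev (n ω : ℕ) (k : Fin n) : ℕ := if k.val < ω - 1 then n - ω + 1 else n - 1 - k.val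

lemma kite_adj_iff {n ω : ℕ} (hω : 2 ≤ ω) (hωn : ω ≤ n) (a b : Fin n) :
    (kite n ω).Adj a b ↔ a ≠ b ∧ klev n ω a ≤ klev n ω b + 1 ∧ klev n ω b ≤ klev n ω a + 1 ∧
      (klev n ω a = klev n ω b → klev n ω a = n - ω + 1) := by
  have ha := a.isLt
  have hb := b.isLt
  constructor
  · rintro ⟨hne, h | h⟩ <;>
    · refine ⟨hne, ?_⟩
      unfold klev
      split_ifs <;> omega
  · rintro ⟨hne, h1, h2, h3⟩
    have hne' : a.val ≠ b.val := fun h => hne (Fin.ext h)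
    refine ⟨hne, ?_⟩
    unfold klev at h1 h2 h3
    split_ifs at h1 h2 h3 with k1 k2 k2
    · left; left; omega
    · -- a < ω-1, b ≥ ω-1 : must have b = ω-1
      have : b.val = ω - 1 := by omega
      left; left; omega
    · have : a.val = ω - 1 := by omega
      right; left; omega
    · -- both ≥ ω-1 : consecutive
      by_cases hab : a.val < b.val
      · left; right; omega
      · right; right; omega


lemma kite_dist {n ω : ℕ} (hn : 3 ≤ n) (hω : 2 ≤ ω) (hωn : ω ≤ n)
    (hH : (kite n ω).Connected) (u : Fin n) :
    (kite n ω).dist ⟨n - 1, by omega⟩ u = klev n ω u := by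
  set t : Fin n := ⟨n - 1, by omega⟩ with ht
  have hkt : klev n ω t = 0 := by unfold klev; simp only [ht]; split_ifs <;> omega
  apply le_antisymm
  · -- upper bound by induction on klev
    suffices H : ∀ j, ∀ u : Fin n, klev n ω u = j → (kite n ω).dist t u ≤ j by
      exact H _ u rfl
    intro j
    induction j with
    | zero =>
      intro u hu
      unfold klev at hu
      have : u = t := by
        apply Fin.ext
        simp only [ht]
        split_ifs at hu <;> omega
      rw [this, SimpleGraph.dist_self]
    | succ j ih =>
      intro u hu
      unfold klev at hu
      by_cases h : u.val < ω - 1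
      · -- neighbor ω-1
        rw [if_pos h] at hu
        have hu' : u.val < ω - 1 := h
        set w : Fin n := ⟨ω - 1, by omega⟩ with hw
        have hadj : (kite n ω).Adj w u := by
          rw [kite_adj_iff hω hωn]
          unfold klev
          simp only [hw]
          have hne : w ≠ u := by intro hh'; apply absurd (congrArg Fin.val hh'); simp [hw]; omega
          refine ⟨hne, ?_⟩
          split_ifs <;> omega
        have hlw : klev n ω w = j := by unfold klev; simp only [hw]; split_ifs <;> omega
        calc (kite n ω).dist t u ≤ (kite n ω).dist t w + (kite n ω).dist w u :=
              hH.dist_triangle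
          _ ≤ j + 1 := by
              have h1 := ih w hlw
              have h2 : (kite n ω).dist w u = 1 := by
                rw [SimpleGraph.dist_eq_one_iff_adj]; exact hadj
              omega
      · rw [if_neg h] at hu
        have hub : u.val + 1 < n := by omega
        set w : Fin n := ⟨u.val + 1, hub⟩ with hw
        have hadj : (kite n ω).Adj w u := by
          rw [kite_adj_iff hω hωn]
          unfold klev
          have hne : w ≠ u := by
            intro hh'; apply absurd (congrArg Fin.val hh'); simp [hw]
          refine ⟨hne, ?_⟩
          simp only [hw]
          split_ifs <;> omega
        have hlw : klev n ω w = j := by unfold klev; simp only [hw]; split_ifs <;> omega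
        calc (kite n ω).dist t u ≤ (kite n ω).dist t w + (kite n ω).dist w u :=
              hH.dist_triangle
          _ ≤ j + 1 := by
              have h1 := ih w hlw
              have h2 : (kite n ω).dist w u = 1 := by
                rw [SimpleGraph.dist_eq_one_iff_adj]; exact hadj
              omega
  · have := lipschitz_dist hH (klev n ω) (fun x y hxy => by
      rw [kite_adj_iff hω hωn] at hxy; omega) t u
    omega

lemma kite_transmission {n ω : ℕ} (hn : 3 ≤ n) (hω : 2 ≤ ω) (hωn : ω ≤ n)
    (hH : (kite n ω).Connected) :
    2 * (∑ u, (kite n ω).dist ⟨n - 1, by omega⟩ u) + ω^2 + n + 2 = n^2 + 3*ω := by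
  have h1 : ∀ u, (kite n ω).dist ⟨n - 1, by omega⟩ u = klev n ω u :=
    kite_dist hn hω hωn hH
  rw [Finset.sum_congr rfl (fun u _ => h1 u)]
  have h2 : ∑ u, klev n ω u = ∑ i ∈ Finset.range n, (if i < ω - 1 then n - ω + 1 else n - 1 - i) := by
    rw [← Fin.sum_univ_eq_sum_range (fun i => if i < ω - 1 then n - ω + 1 else n - 1 - i) n]
    rfl
  rw [h2, Finset.sum_ite]
  have hf1 : (Finset.range n).filter (fun i => i < ω - 1) = Finset.range (ω - 1) := by
    ext i; simp only [Finset.mem_filter, Finset.mem_range]; omega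
  have hf2 : (Finset.range n).filter (fun i => ¬ i < ω - 1) = Finset.Ico (ω - 1) n := by
    ext i; simp only [Finset.mem_filter, Finset.mem_range, Finset.mem_Ico]; omega
  rw [hf1, hf2, Finset.sum_const, Finset.card_range, smul_eq_mul]
  have hf3 : ∑ i ∈ Finset.Ico (ω - 1) n, (n - 1 - i) = ∑ j ∈ Finset.range (n - ω + 1), j := by
    apply Finset.sum_nbij' (fun i => n - 1 - i) (fun j => n - 1 - j) <;>
      intros <;> simp_all only [Finset.mem_Ico, Finset.mem_range] <;> omega
  rw [hf3]
  have hf4 := Finset.sum_range_id_mul_two (n - ω + 1)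
  obtain ⟨k, rfl⟩ : ∃ k, n = ω + k := ⟨n - ω, by omega⟩
  have e1 : ω + k - ω + 1 = k + 1 := by omega
  have e2 : k + 1 - 1 = k := by omega
  rw [e1] at hf4 ⊢
  rw [e2] at hf4
  have e3 : ω - 1 = ω - 1 := rfl
  obtain ⟨w, rfl⟩ : ∃ w, ω = w + 2 := ⟨ω - 2, by omega⟩
  have e4 : w + 2 - 1 = w + 1 := by omega
  rw [e4]
  nlinarith [hf4]


lemma arith_core (n ω e m : ℕ) (q : ℕ → ℕ)
    (hω2 : 2 ≤ ω) (hωn : ω ≤ n) (he1 : 1 ≤ e) (hme : m ≤ e)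
    (hB1 : ∀ i, i < e → q i + (i + 1) ≤ n)
    (hB2 : ∀ i, m + 1 ≤ i → i < e → q i + (i - 1) + ω ≤ n)
    (hB4a : e + ω ≤ n + 1)
    (hB4b : m = e → e + ω ≤ n) :
    2 * (∑ i ∈ Finset.range e, q i) + ω ^ 2 + n + 2 ≤ n ^ 2 + 3 * ω ∧
      (2 * (∑ i ∈ Finset.range e, q i) + ω ^ 2 + n + 2 = n ^ 2 + 3 * ω →
        e + ω = n + 1 ∧ (3 ≤ ω → m + 1 = e) ∧ ∀ i, i < e → q i + (i + 1) = n) := by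
  have hScast : ((∑ i ∈ Finset.range e, q i : ℕ) : ℤ) = ∑ i ∈ Finset.range e, (q i : ℤ) := by
    push_cast; rfl
  have hgauss : (∑ i ∈ Finset.range e, (i : ℤ)) * 2 = (e : ℤ) * ((e : ℤ) - 1) := by
    have h := Finset.sum_range_id_mul_two e
    have h2 : (((∑ i ∈ Finset.range e, i) * 2 : ℕ) : ℤ) = (((e * (e - 1)) : ℕ) : ℤ) := by
      exact_mod_cast congrArg (fun x : ℕ => (x : ℤ)) h
    push_cast [Nat.cast_sub he1] at h2
    linarith
  have hA2 : (∑ i ∈ Finset.range e, ((n : ℤ) - 1 - i)) * 2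
      = 2 * (e : ℤ) * ((n : ℤ) - 1) - (e : ℤ) * ((e : ℤ) - 1) := by
    rw [Finset.sum_sub_distrib, Finset.sum_sub_distrib, Finset.sum_const, Finset.sum_const,
      Finset.card_range]
    simp only [nsmul_eq_mul, mul_one]
    push_cast
    linarith [hgauss]
  by_cases hcase : m = e
  · -- K is entirely on the top level : strict inequality
    have hSle : (∑ i ∈ Finset.range e, (q i : ℤ)) ≤ ∑ i ∈ Finset.range e, ((n : ℤ) - 1 - i) := by
      apply Finset.sum_le_sum
      intro i hi
      simp only [Finset.mem_range] at hi
      have := hB1 i hi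
      push_cast; omega
    have hen : e + ω ≤ n := hB4b hcase
    have hstrict : 2 * (∑ i ∈ Finset.range e, (q i : ℤ)) + (ω : ℤ) ^ 2 + n + 2
        < (n : ℤ) ^ 2 + 3 * ω := by
      have h1 : (0 : ℤ) ≤ ((n : ℤ) - ω - e) := by
        have : (e : ℤ) + ω ≤ n := by exact_mod_cast hen
        linarith
      have h2 : (0 : ℤ) ≤ ((n : ℤ) + ω - e - 1) := by
        have : (e : ℤ) + ω ≤ n := by exact_mod_cast hen
        have : (0:ℤ) ≤ ω := by positivity
        linarith
      nlinarith [mul_nonneg h1 h2, hSle, hA2, (by exact_mod_cast hω2 : (2:ℤ) ≤ ω)]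
    constructor
    · have : ((2 * (∑ i ∈ Finset.range e, q i) + ω ^ 2 + n + 2 : ℕ) : ℤ)
          ≤ ((n ^ 2 + 3 * ω : ℕ) : ℤ) := by
        push_cast
        linarith [hstrict]
      exact_mod_cast this
    · intro heq
      exfalso
      have : ((2 * (∑ i ∈ Finset.range e, q i) + ω ^ 2 + n + 2 : ℕ) : ℤ)
          = ((n ^ 2 + 3 * ω : ℕ) : ℤ) := by exact_mod_cast congrArg (fun x : ℕ => (x : ℤ)) heq
      push_cast at this
      linarith [hstrict]
  · -- m < e
    have hmlt : m < e := lt_of_le_of_ne hme hcase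
    have hqb : ∀ i ∈ Finset.range e,
        (q i : ℤ) ≤ (n : ℤ) - 1 - i - (if m + 1 ≤ i then (ω : ℤ) - 2 else 0) := by
      intro i hi
      simp only [Finset.mem_range] at hi
      split_ifs with h
      · have := hB2 i h hi
        have hi1 : 1 ≤ i := by omega
        have : (q i : ℤ) + ((i : ℤ) - 1) + ω ≤ n := by
          have h5 : ((q i + (i - 1) + ω : ℕ) : ℤ) ≤ (n : ℤ) := by exact_mod_cast this
          push_cast [Nat.cast_sub hi1] at h5
          linarith
        linarith
      · have := hB1 i hi
        push_cast; omega
    have hSle := Finset.sum_le_sum hqb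
    have hfc : #((Finset.range e).filter (fun i => m + 1 ≤ i)) = e - m - 1 := by
      have : (Finset.range e).filter (fun i => m + 1 ≤ i) = Finset.Ico (m + 1) e := by
        ext j
        simp only [Finset.mem_filter, Finset.mem_range, Finset.mem_Ico]
        omega
      rw [this, Nat.card_Ico]
      omega
    have hI : ∑ i ∈ Finset.range e, (if m + 1 ≤ i then (ω : ℤ) - 2 else 0)
        = ((e : ℤ) - 1 - m) * ((ω : ℤ) - 2) := by
      rw [Finset.sum_ite, Finset.sum_const_zero, add_zero, Finset.sum_const, hfc,
        nsmul_eq_mul]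
      have : ((e - m - 1 : ℕ) : ℤ) = (e : ℤ) - 1 - m := by push_cast [Nat.cast_sub]; omega
      rw [this]
    have hBsum : ∑ i ∈ Finset.range e, ((n : ℤ) - 1 - i - (if m + 1 ≤ i then (ω : ℤ) - 2 else 0))
        = ∑ i ∈ Finset.range e, ((n : ℤ) - 1 - i) - ((e : ℤ) - 1 - m) * ((ω : ℤ) - 2) := by
      rw [Finset.sum_sub_distrib, hI]
    have hP : (0 : ℤ) ≤ (n : ℤ) + 1 - ω - e := by
      have : (e : ℤ) + ω ≤ (n : ℤ) + 1 := by exact_mod_cast hB4a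
      linarith
    have hQ : (1 : ℤ) ≤ (n : ℤ) + ω - e - 2 := by
      have h1 : (e : ℤ) + ω ≤ (n : ℤ) + 1 := by exact_mod_cast hB4a
      have h2 : (2 : ℤ) ≤ ω := by exact_mod_cast hω2
      linarith
    have hR1 : (0 : ℤ) ≤ (ω : ℤ) - 2 := by
      have : (2 : ℤ) ≤ ω := by exact_mod_cast hω2
      linarith
    have hR2 : (0 : ℤ) ≤ (e : ℤ) - 1 - m := by
      have h1 : (m : ℤ) < e := by exact_mod_cast hmlt
      linarith
    -- key identity
    have hkey : 2 * (∑ i ∈ Finset.range e, ((n : ℤ) - 1 - i))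
        + (ω : ℤ) ^ 2 + n + 2
        + ((n : ℤ) + 1 - ω - e) * ((n : ℤ) + ω - e - 2) = (n : ℤ) ^ 2 + 3 * ω := by
      linear_combination hA2
    have hfinal : 2 * (∑ i ∈ Finset.range e, (q i : ℤ)) + (ω : ℤ) ^ 2 + n + 2
        + ((n : ℤ) + 1 - ω - e) * ((n : ℤ) + ω - e - 2)
        + 2 * ((e : ℤ) - 1 - m) * ((ω : ℤ) - 2)
        + 2 * ((∑ i ∈ Finset.range e, ((n : ℤ) - 1 - i - (if m + 1 ≤ i then (ω : ℤ) - 2 else 0)))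
            - ∑ i ∈ Finset.range e, (q i : ℤ))
        = (n : ℤ) ^ 2 + 3 * ω := by
      rw [hBsum]
      linear_combination hkey
    have hSd : (0:ℤ) ≤ (∑ i ∈ Finset.range e, ((n : ℤ) - 1 - i
        - (if m + 1 ≤ i then (ω : ℤ) - 2 else 0))) - ∑ i ∈ Finset.range e, (q i : ℤ) := by
      linarith [hSle]
    have hPQ : (0:ℤ) ≤ ((n : ℤ) + 1 - ω - e) * ((n : ℤ) + ω - e - 2) :=
      mul_nonneg hP (by linarith)
    have hRR : (0:ℤ) ≤ ((e : ℤ) - 1 - m) * ((ω : ℤ) - 2) := mul_nonneg hR2 hR1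
    constructor
    · have : ((2 * (∑ i ∈ Finset.range e, q i) + ω ^ 2 + n + 2 : ℕ) : ℤ)
          ≤ ((n ^ 2 + 3 * ω : ℕ) : ℤ) := by
        push_cast
        linarith [hfinal, hSd, hPQ, hRR]
      exact_mod_cast this
    · intro heq
      have heqz : ((2 * (∑ i ∈ Finset.range e, q i) + ω ^ 2 + n + 2 : ℕ) : ℤ)
          = ((n ^ 2 + 3 * ω : ℕ) : ℤ) := by exact_mod_cast congrArg (fun x : ℕ => (x : ℤ)) heq
      push_cast at heqz
      have hz1 : ((n : ℤ) + 1 - ω - e) * ((n : ℤ) + ω - e - 2) = 0 := by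
        linarith [hfinal, hSd, hPQ, hRR]
      have hz2 : ((e : ℤ) - 1 - m) * ((ω : ℤ) - 2) = 0 := by
        linarith [hfinal, hSd, hPQ, hRR]
      have hz3 : (∑ i ∈ Finset.range e, ((n : ℤ) - 1 - i
          - (if m + 1 ≤ i then (ω : ℤ) - 2 else 0))) = ∑ i ∈ Finset.range e, (q i : ℤ) := by
        linarith [hfinal, hSd, hPQ, hRR]
      have heω : e + ω = n + 1 := by
        rcases mul_eq_zero.mp hz1 with h | h
        · have : (e : ℤ) + ω = (n : ℤ) + 1 := by linarith
          exact_mod_cast this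
        · exfalso; linarith
      refine ⟨heω, ?_, ?_⟩
      · intro hω3
        rcases mul_eq_zero.mp hz2 with h | h
        · have : (m : ℤ) + 1 = (e : ℤ) := by linarith
          exact_mod_cast this
        · exfalso
          have : (3 : ℤ) ≤ ω := by exact_mod_cast hω3
          linarith
      · intro i hi
        have hterm : ∀ j ∈ Finset.range e, (q j : ℤ)
            = (n : ℤ) - 1 - j - (if m + 1 ≤ j then (ω : ℤ) - 2 else 0) := by
          exact (Finset.sum_eq_sum_iff_of_le hqb).mp (by linarith [hz3])
        have hti := hterm i (Finset.mem_range.mpr hi)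
        split_ifs at hti with h
        · rcases mul_eq_zero.mp hz2 with h2 | h2
          · exfalso
            have : (m : ℤ) + 1 = (e : ℤ) := by linarith
            have : m + 1 = e := by exact_mod_cast this
            omega
          · have hω2' : (ω : ℤ) = 2 := by linarith
            have : (q i : ℤ) + (i + 1) = n := by rw [hti, hω2']; ring
            exact_mod_cast this
        · have : (q i : ℤ) + (i + 1) = n := by rw [hti]; ring
          exact_mod_cast this


lemma transmission_core {n : ℕ} (hn : 3 ≤ n) (G : SimpleGraph (Fin n)) (hG : G.Connected)
    (v : Fin n) :
    2 * (∑ u, G.dist v u) + G.cliqueNum ^ 2 + n + 2 ≤ n ^ 2 + 3 * G.cliqueNum ∧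
      (2 * (∑ u, G.dist v u) + G.cliqueNum ^ 2 + n + 2 = n ^ 2 + 3 * G.cliqueNum →
        (∀ u, G.dist v u ≤ n - G.cliqueNum + 1) ∧
        (∀ i, 1 ≤ i → i ≤ n - G.cliqueNum + 1 →
          Nat.card {u : Fin n // G.dist v u < i} = i) ∧
        G.IsClique {u : Fin n | n - G.cliqueNum ≤ G.dist v u}) := by
  classical
  obtain ⟨K, hK⟩ := G.exists_isNClique_cliqueNum
  have hωn : G.cliqueNum ≤ n := by
    have := Finset.card_le_univ K
    simp only [hK.card_eq] at this
    simpa using this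
  have hω2 : 2 ≤ G.cliqueNum := by
    have hv2 : (⟨0, by omega⟩ : Fin n) ≠ ⟨1, by omega⟩ := by
      intro h; exact absurd (congrArg Fin.val h) (by simp)
    have hd1 : 1 ≤ G.dist ⟨0, by omega⟩ ⟨1, by omega⟩ := hG.pos_dist_of_ne hv2
    obtain ⟨k, hk⟩ : ∃ k, G.dist (⟨0, by omega⟩ : Fin n) ⟨1, by omega⟩ = k + 1 :=
      ⟨G.dist ⟨0, by omega⟩ ⟨1, by omega⟩ - 1, by omega⟩
    obtain ⟨x, hadj, -⟩ := step_down hG hk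
    have hcl : G.IsClique {x, (⟨1, by omega⟩ : Fin n)} := by
      rw [SimpleGraph.isClique_pair]; exact fun _ => hadj
    have hcl' : G.IsClique (({x, ⟨1, by omega⟩} : Finset (Fin n)) : Set (Fin n)) := by
      simpa using hcl
    have := SimpleGraph.IsClique.card_le_cliqueNum
      (t := ({x, ⟨1, by omega⟩} : Finset (Fin n))) (tc := hcl')
    rwa [Finset.card_pair (G.ne_of_adj hadj)] at this
  -- the eccentricity e of v
  obtain ⟨u0, -, hu0⟩ := Finset.exists_max_image Finset.univ (G.dist v) ⟨v, Finset.mem_univ v⟩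
  have hmax : ∀ u, G.dist v u ≤ G.dist v u0 := fun u => hu0 u (Finset.mem_univ u)
  have hdist_lt : ∀ u, G.dist v u < n := by
    intro u
    obtain ⟨p, hp, hlen⟩ := hG.exists_path_of_dist v u
    have hl2 := hp.length_lt
    simp only [Fintype.card_fin] at hl2
    omega
  have he1 : 1 ≤ G.dist v u0 := by
    have h01 : (⟨0, by omega⟩ : Fin n) ≠ v ∨ (⟨1, by omega⟩ : Fin n) ≠ v := by
      by_contra h
      push_neg at h
      exact absurd (congrArg Fin.val (h.1.trans h.2.symm)) (by simp)
    rcases h01 with h | h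
    · have hp := hG.pos_dist_of_ne (Ne.symm h)
      have hm' := hmax ⟨0, by omega⟩
      omega
    · have hp := hG.pos_dist_of_ne (Ne.symm h)
      have hm' := hmax ⟨1, by omega⟩
      omega
  -- the closest clique vertex
  have hKne : K.Nonempty := by rw [← Finset.card_pos, hK.card_eq]; omega
  obtain ⟨x0, hx0K, hx0⟩ := Finset.exists_min_image K (G.dist v) hKne
  have hKlev : ∀ x ∈ K, G.dist v x0 ≤ G.dist v x ∧ G.dist v x ≤ G.dist v x0 + 1 := by
    intro x hx
    refine ⟨hx0 x hx, ?_⟩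
    by_cases hxx : x = x0
    · subst hxx; omega
    · have hadj := hK.isClique hx0K hx (Ne.symm hxx)
      have h1 : G.dist x0 x = 1 := SimpleGraph.dist_eq_one_iff_adj.mpr hadj
      have := hG.dist_triangle (u := v) (v := x0) (w := x)
      omega
  have hme : G.dist v x0 ≤ G.dist v u0 := hmax x0
  -- level witnesses
  have hwex : ∀ i, ∃ x, i ≤ G.dist v u0 → G.dist v x = i := by
    intro i
    by_cases h : i ≤ G.dist v u0
    · obtain ⟨x, hx⟩ := exists_level hG (v := v) (u := u0) (i := i) h
      exact ⟨x, fun _ => hx⟩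
    · exact ⟨v, fun h' => absurd h' h⟩
  choose w hw using hwex
  -- the sum identity
  have hsum : ∑ u, G.dist v u =
      ∑ i ∈ Finset.range (G.dist v u0), #(Finset.univ.filter (fun u => i < G.dist v u)) := by
    rw [sum_eq_sum_card (G.dist v) n hdist_lt]
    symm
    apply Finset.sum_subset
    · intro i hi
      simp only [Finset.mem_range] at hi ⊢
      have := hdist_lt u0
      omega
    · intro i _ hi
      simp only [Finset.mem_range, not_lt] at hi
      simp only [Finset.card_eq_zero]
      rw [Finset.filter_eq_empty_iff]
      intro u _
      have := hmax u
      omega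
  -- B1
  have hB1 : ∀ i, i < G.dist v u0 →
      #(Finset.univ.filter (fun u => i < G.dist v u)) + (i + 1) ≤ n := by
    intro i hi
    have hA : #((Finset.range (i + 1)).image w) = i + 1 := by
      rw [Finset.card_image_of_injOn, Finset.card_range]
      intro a ha b hb hab
      simp only [Finset.coe_range, Set.mem_Iio] at ha hb
      have h1 := hw a (by omega)
      have h2 := hw b (by omega)
      rw [hab] at h1; omega
    have hdisj : Disjoint (Finset.univ.filter (fun u => i < G.dist v u))
        ((Finset.range (i + 1)).image w) := by
      rw [Finset.disjoint_left]
      intro x hx hx'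
      simp only [Finset.mem_filter] at hx
      simp only [Finset.mem_image, Finset.mem_range] at hx'
      obtain ⟨j, hj, rfl⟩ := hx'
      have := hw j (by omega)
      omega
    have hle := Finset.card_le_univ ((Finset.univ.filter (fun u => i < G.dist v u)) ∪
      ((Finset.range (i + 1)).image w))
    rw [Finset.card_union_of_disjoint hdisj, hA] at hle
    simp only [Finset.card_univ, Fintype.card_fin] at hle
    exact hle
  -- B2
  have hB2 : ∀ i, G.dist v x0 + 1 ≤ i → i < G.dist v u0 →
      #(Finset.univ.filter (fun u => i < G.dist v u)) + (i - 1) + G.cliqueNum ≤ n := by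
    intro i him hi
    have hBcard : #(((Finset.range (i + 1)).filter
        (fun j => j ≠ G.dist v x0 ∧ j ≠ G.dist v x0 + 1)).image w) = i - 1 := by
      rw [Finset.card_image_of_injOn]
      · have hset : (Finset.range (i + 1)).filter
            (fun j => j ≠ G.dist v x0 ∧ j ≠ G.dist v x0 + 1) =
            (Finset.range (i + 1)) \ {G.dist v x0, G.dist v x0 + 1} := by
          ext j
          simp only [Finset.mem_filter, Finset.mem_sdiff, Finset.mem_range,
            Finset.mem_insert, Finset.mem_singleton]
          tauto
        rw [hset, Finset.card_sdiff_of_subset (by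
          intro j hj
          simp only [Finset.mem_insert, Finset.mem_singleton] at hj
          simp only [Finset.mem_range]
          omega), Finset.card_range]
        rw [Finset.card_insert_of_notMem (by simp), Finset.card_singleton]
        omega
      · intro a ha b hb hab
        simp only [Finset.coe_filter, Set.mem_setOf_eq, Finset.mem_range] at ha hb
        obtain ⟨ha, -⟩ := ha
        obtain ⟨hb, -⟩ := hb
        have h1 := hw a (by omega)
        have h2 := hw b (by omega)
        rw [hab] at h1; omega
    have hdisj1 : Disjoint (((Finset.range (i + 1)).filter
        (fun j => j ≠ G.dist v x0 ∧ j ≠ G.dist v x0 + 1)).image w) K := by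
      rw [Finset.disjoint_left]
      intro x hx hx'
      simp only [Finset.mem_image, Finset.mem_filter, Finset.mem_range] at hx
      obtain ⟨j, ⟨hj, hj1, hj2⟩, rfl⟩ := hx
      have h1 := hw j (by omega)
      have h2 := hKlev _ hx'
      omega
    have hdisj2 : Disjoint (Finset.univ.filter (fun u => i < G.dist v u))
        ((((Finset.range (i + 1)).filter
          (fun j => j ≠ G.dist v x0 ∧ j ≠ G.dist v x0 + 1)).image w) ∪ K) := by
      rw [Finset.disjoint_left]
      intro x hx hx'
      simp only [Finset.mem_filter] at hx
      rcases Finset.mem_union.mp hx' with h | h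
      · simp only [Finset.mem_image, Finset.mem_filter, Finset.mem_range] at h
        obtain ⟨j, ⟨hj, -, -⟩, rfl⟩ := h
        have := hw j (by omega)
        omega
      · have := hKlev _ h
        omega
    have hle := Finset.card_le_univ ((Finset.univ.filter (fun u => i < G.dist v u)) ∪
      ((((Finset.range (i + 1)).filter
        (fun j => j ≠ G.dist v x0 ∧ j ≠ G.dist v x0 + 1)).image w) ∪ K))
    rw [Finset.card_union_of_disjoint hdisj2, Finset.card_union_of_disjoint hdisj1,
      hBcard, hK.card_eq] at hle
    simp only [Finset.card_univ, Fintype.card_fin] at hle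
    omega
  -- B4a : e + ω ≤ n + 1
  have hB4a : G.dist v u0 + G.cliqueNum ≤ n + 1 := by
    have hBcard : #(((Finset.range (G.dist v u0 + 1)).filter
        (fun j => j ≠ G.dist v x0 ∧ j ≠ G.dist v x0 + 1)).image w) ≥ G.dist v u0 - 1 := by
      rw [Finset.card_image_of_injOn]
      · have hsub : (Finset.range (G.dist v u0 + 1)) \ {G.dist v x0, G.dist v x0 + 1} ⊆
            (Finset.range (G.dist v u0 + 1)).filter
              (fun j => j ≠ G.dist v x0 ∧ j ≠ G.dist v x0 + 1) := by
          intro j hj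
          simp only [Finset.mem_sdiff, Finset.mem_range, Finset.mem_insert,
            Finset.mem_singleton] at hj
          simp only [Finset.mem_filter, Finset.mem_range]
          tauto
        have h1 := Finset.card_le_card hsub
        have h2 := Finset.le_card_sdiff ({G.dist v x0, G.dist v x0 + 1} : Finset ℕ)
          (Finset.range (G.dist v u0 + 1))
        have h3 : #({G.dist v x0, G.dist v x0 + 1} : Finset ℕ) ≤ 2 :=
          Finset.card_insert_le _ _ |>.trans (by simp)
        rw [Finset.card_range] at h2
        omega
      · intro a ha b hb hab
        simp only [Finset.coe_filter, Set.mem_setOf_eq, Finset.mem_range] at ha hb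
        obtain ⟨ha, -⟩ := ha
        obtain ⟨hb, -⟩ := hb
        have h1 := hw a (by omega)
        have h2 := hw b (by omega)
        rw [hab] at h1; omega
    have hdisj1 : Disjoint (((Finset.range (G.dist v u0 + 1)).filter
        (fun j => j ≠ G.dist v x0 ∧ j ≠ G.dist v x0 + 1)).image w) K := by
      rw [Finset.disjoint_left]
      intro x hx hx'
      simp only [Finset.mem_image, Finset.mem_filter, Finset.mem_range] at hx
      obtain ⟨j, ⟨hj, hj1, hj2⟩, rfl⟩ := hx
      have h1 := hw j (by omega)
      have h2 := hKlev _ hx'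
      omega
    have hle := Finset.card_le_univ ((((Finset.range (G.dist v u0 + 1)).filter
        (fun j => j ≠ G.dist v x0 ∧ j ≠ G.dist v x0 + 1)).image w) ∪ K)
    rw [Finset.card_union_of_disjoint hdisj1, hK.card_eq] at hle
    simp only [Finset.card_univ, Fintype.card_fin] at hle
    omega
  -- B4b
  have hB4b : G.dist v x0 = G.dist v u0 → G.dist v u0 + G.cliqueNum ≤ n := by
    intro hmeq
    have hBcard : #((Finset.range (G.dist v u0)).image w) = G.dist v u0 := by
      rw [Finset.card_image_of_injOn, Finset.card_range]
      intro a ha b hb hab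
      simp only [Finset.coe_range, Set.mem_Iio] at ha hb
      have h1 := hw a (by omega)
      have h2 := hw b (by omega)
      rw [hab] at h1; omega
    have hdisj1 : Disjoint ((Finset.range (G.dist v u0)).image w) K := by
      rw [Finset.disjoint_left]
      intro x hx hx'
      simp only [Finset.mem_image, Finset.mem_range] at hx
      obtain ⟨j, hj, rfl⟩ := hx
      have h1 := hw j (by omega)
      have h2 := hKlev _ hx'
      omega
    have hle := Finset.card_le_univ (((Finset.range (G.dist v u0)).image w) ∪ K)
    rw [Finset.card_union_of_disjoint hdisj1, hBcard, hK.card_eq] at hle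
    simp only [Finset.card_univ, Fintype.card_fin] at hle
    omega
  -- apply the arithmetic core
  obtain ⟨hineq, heqc⟩ := arith_core n G.cliqueNum (G.dist v u0) (G.dist v x0)
    (fun i => #(Finset.univ.filter (fun u => i < G.dist v u)))
    hω2 hωn he1 hme hB1 hB2 hB4a hB4b
  rw [← hsum] at hineq heqc
  refine ⟨hineq, ?_⟩
  intro heq
  obtain ⟨heω, hm3, hqi⟩ := heqc heq
  have hee : G.dist v u0 = n - G.cliqueNum + 1 := by omega
  refine ⟨fun u => le_trans (hmax u) (le_of_eq hee), ?_, ?_⟩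
  · -- level cardinalities
    intro i hi1 hi2
    rw [Nat.card_eq_fintype_card, Fintype.card_subtype]
    have hdisj : Disjoint (Finset.univ.filter (fun u : Fin n => G.dist v u < i))
        (Finset.univ.filter (fun u : Fin n => i - 1 < G.dist v u)) := by
      rw [Finset.disjoint_left]
      intro x hx hx'
      simp only [Finset.mem_filter] at hx hx'
      omega
    have hunion : (Finset.univ.filter (fun u : Fin n => G.dist v u < i))
        ∪ (Finset.univ.filter (fun u : Fin n => i - 1 < G.dist v u)) = Finset.univ := by
      ext u
      simp only [Finset.mem_union, Finset.mem_filter, Finset.mem_univ, true_and, iff_true]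
      omega
    have hcompl := congrArg Finset.card hunion
    rw [Finset.card_union_of_disjoint hdisj] at hcompl
    simp only [Finset.card_univ, Fintype.card_fin] at hcompl
    have := hqi (i - 1) (by omega)
    omega
  · -- the top two levels form a clique
    have hsetF : {u : Fin n | n - G.cliqueNum ≤ G.dist v u} =
        ↑(Finset.univ.filter (fun u : Fin n => n - G.cliqueNum ≤ G.dist v u)) := by
      ext u
      simp only [Set.mem_setOf_eq, Finset.coe_filter, Finset.mem_univ, true_and]
    by_cases hecase : G.dist v u0 = 1
    · -- ω = n : the whole graph is a clique
      have hωeq : G.cliqueNum = n := by omega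
      have hKuniv : K = Finset.univ := by
        apply Finset.eq_univ_of_card
        rw [hK.card_eq, hωeq, Fintype.card_fin]
      have : {u : Fin n | n - G.cliqueNum ≤ G.dist v u} = ↑K := by
        rw [hKuniv, Finset.coe_univ]
        ext u
        simp only [Set.mem_setOf_eq, Set.mem_univ, iff_true]
        omega
      rw [this]
      exact hK.isClique
    · -- e ≥ 2
      have he2 : 2 ≤ G.dist v u0 := by omega
      have hFq : Finset.univ.filter (fun u : Fin n => n - G.cliqueNum ≤ G.dist v u) =
          Finset.univ.filter (fun u : Fin n => G.dist v u0 - 2 < G.dist v u) := by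
        ext u
        simp only [Finset.mem_filter, Finset.mem_univ, true_and]
        omega
      have hFcard : #(Finset.univ.filter
          (fun u : Fin n => n - G.cliqueNum ≤ G.dist v u)) = G.cliqueNum := by
        rw [hFq]
        have := hqi (G.dist v u0 - 2) (by omega)
        omega
      by_cases hω3 : 3 ≤ G.cliqueNum
      · have hm3' := hm3 hω3
        have hKsub : K ⊆ Finset.univ.filter
            (fun u : Fin n => n - G.cliqueNum ≤ G.dist v u) := by
          intro x hx
          simp only [Finset.mem_filter, Finset.mem_univ, true_and]
          have := hKlev x hx
          omega
        have hKeq : K = Finset.univ.filter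
            (fun u : Fin n => n - G.cliqueNum ≤ G.dist v u) := by
          apply Finset.eq_of_subset_of_card_le hKsub
          rw [hFcard, hK.card_eq]
        rw [hsetF, ← hKeq]
        exact hK.isClique
      · -- ω = 2
        have hωeq : G.cliqueNum = 2 := by omega
        obtain ⟨x, hxadj, hxd⟩ := step_down hG
          (v := v) (w := u0) (k := G.dist v u0 - 1) (by omega)
        have hxne : x ≠ u0 := by intro h; rw [h] at hxd; omega
        have hsub : ({x, u0} : Finset (Fin n)) ⊆ Finset.univ.filter
            (fun u : Fin n => n - G.cliqueNum ≤ G.dist v u) := by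
          intro y hy
          simp only [Finset.mem_insert, Finset.mem_singleton] at hy
          simp only [Finset.mem_filter, Finset.mem_univ, true_and]
          rcases hy with rfl | rfl <;> omega
        have hFeq : ({x, u0} : Finset (Fin n)) = Finset.univ.filter
            (fun u : Fin n => n - G.cliqueNum ≤ G.dist v u) := by
          apply Finset.eq_of_subset_of_card_le hsub
          rw [hFcard, Finset.card_pair hxne, hωeq]
        rw [hsetF, ← hFeq]
        intro a ha b hb hne
        simp only [Finset.coe_insert, Finset.coe_singleton, Set.mem_insert_iff,
          Set.mem_singleton_iff] at ha hb
        rcases ha with rfl | rfl <;> rcases hb with rfl | rfl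
        · exact absurd rfl hne
        · exact hxadj
        · exact hxadj.symm
        · exact absurd rfl hne


lemma reconstruction {n ω : ℕ} (hn : 3 ≤ n) (G : SimpleGraph (Fin n)) (hG : G.Connected)
    (v : Fin n) (hω2 : 2 ≤ ω) (hωn : ω ≤ n)
    (hmax : ∀ u, G.dist v u ≤ n - ω + 1)
    (hcard : ∀ i, 1 ≤ i → i ≤ n - ω + 1 → Nat.card {u : Fin n // G.dist v u < i} = i)
    (hclq : G.IsClique {u : Fin n | n - ω ≤ G.dist v u}) :
    Nonempty (G ≃g kite n ω) := by
  classical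
  -- filter versions of the cardinality hypothesis
  have hcardF : ∀ i, i ≤ n - ω + 1 → #(Finset.univ.filter (fun u => G.dist v u < i)) = i := by
    intro i hi
    rcases Nat.eq_zero_or_pos i with rfl | hpos
    · simp
    · have := hcard i hpos hi
      rwa [Nat.card_eq_fintype_card, Fintype.card_subtype] at this
  -- each level below the top is a singleton
  have hlevel : ∀ i, i ≤ n - ω → ∃ x, G.dist v x = i ∧ ∀ y, G.dist v y = i → y = x := by
    intro i hi
    have h1 := hcardF i (by omega)
    have h2 := hcardF (i + 1) (by omega)
    have hsub : (Finset.univ.filter (fun u => G.dist v u < i)) ⊆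
        (Finset.univ.filter (fun u => G.dist v u < i + 1)) := by
      intro x hx
      simp only [Finset.mem_filter, Finset.mem_univ, true_and] at hx ⊢
      omega
    have hdiffcard : #((Finset.univ.filter (fun u => G.dist v u < i + 1)) \
        (Finset.univ.filter (fun u => G.dist v u < i))) = 1 := by
      rw [Finset.card_sdiff_of_subset hsub, h1, h2]; omega
    obtain ⟨x, hx⟩ := Finset.card_eq_one.mp hdiffcard
    refine ⟨x, ?_, ?_⟩
    · have : x ∈ (Finset.univ.filter (fun u => G.dist v u < i + 1)) \
          (Finset.univ.filter (fun u => G.dist v u < i)) := by rw [hx]; simp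
      simp only [Finset.mem_sdiff, Finset.mem_filter, Finset.mem_univ, true_and, not_lt] at this
      omega
    · intro y hy
      have : y ∈ (Finset.univ.filter (fun u => G.dist v u < i + 1)) \
          (Finset.univ.filter (fun u => G.dist v u < i)) := by
        simp only [Finset.mem_sdiff, Finset.mem_filter, Finset.mem_univ, true_and, not_lt]
        omega
      rw [hx] at this
      simpa using this
  have hlevex : ∀ i, ∃ x, i ≤ n - ω → (G.dist v x = i ∧ ∀ y, G.dist v y = i → y = x) := by
    intro i
    by_cases h : i ≤ n - ω
    · obtain ⟨x, hx⟩ := hlevel i h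
      exact ⟨x, fun _ => hx⟩
    · exact ⟨v, fun h' => absurd h' h⟩
  choose uu huu using hlevex
  -- the top level has ω - 1 elements
  have htopcard : #(Finset.univ.filter (fun u => G.dist v u = n - ω + 1)) = ω - 1 := by
    have h1 := hcardF (n - ω + 1) (le_refl _)
    have hsplit : Finset.univ.filter (fun u => G.dist v u = n - ω + 1) =
        Finset.univ \ (Finset.univ.filter (fun u => G.dist v u < n - ω + 1)) := by
      ext u
      simp only [Finset.mem_filter, Finset.mem_sdiff, Finset.mem_univ, true_and, not_lt]
      have := hmax u
      omega
    rw [hsplit, Finset.card_sdiff_of_subset (Finset.filter_subset _ _), h1]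
    simp only [Finset.card_univ, Fintype.card_fin]
    omega
  -- adjacency characterization
  have hadj_char : ∀ x y, G.Adj x y ↔ x ≠ y ∧ G.dist v x ≤ G.dist v y + 1 ∧
      G.dist v y ≤ G.dist v x + 1 ∧ (G.dist v x = G.dist v y → G.dist v x = n - ω + 1) := by
    intro x y
    constructor
    · intro hadj
      refine ⟨G.ne_of_adj hadj, ?_, ?_, ?_⟩
      · have h1 : G.dist y x = 1 := SimpleGraph.dist_eq_one_iff_adj.mpr hadj.symm
        have := hG.dist_triangle (u := v) (v := y) (w := x)
        omega
      · have h1 : G.dist x y = 1 := SimpleGraph.dist_eq_one_iff_adj.mpr hadj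
        have := hG.dist_triangle (u := v) (v := x) (w := y)
        omega
      · intro heq
        by_contra hne
        have hle : G.dist v x ≤ n - ω := by have := hmax x; omega
        obtain ⟨z, hz1, hz2⟩ := hlevel (G.dist v x) hle
        have hx := hz2 x rfl
        have hy := hz2 y heq.symm
        exact G.ne_of_adj hadj (hx.trans hy.symm)
    · rintro ⟨hne, h1, h2, h3⟩
      rcases Nat.lt_trichotomy (G.dist v x) (G.dist v y) with hlt | heq | hgt
      · have hxy : G.dist v y = G.dist v x + 1 := by omega
        by_cases htop : G.dist v y = n - ω + 1
        · have hx' : n - ω ≤ G.dist v x := by omega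
          exact hclq (by simpa using hx') (by simp only [Set.mem_setOf_eq]; omega) hne
        · have hyle : G.dist v y ≤ n - ω := by have := hmax y; omega
          obtain ⟨z, hzadj, hzd⟩ := step_down hG hxy
          obtain ⟨x', hx'1, hx'2⟩ := hlevel (G.dist v x) (by omega)
          have e1 : z = x' := hx'2 z hzd
          have e2 : x = x' := hx'2 x rfl
          rw [e2, ← e1]
          exact hzadj
      · have htop := h3 heq
        exact hclq (by simp only [Set.mem_setOf_eq]; omega)
          (by simp only [Set.mem_setOf_eq]; omega) hne
      · have hxy : G.dist v x = G.dist v y + 1 := by omega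
        by_cases htop : G.dist v x = n - ω + 1
        · exact hclq (by simp only [Set.mem_setOf_eq]; omega)
            (by simp only [Set.mem_setOf_eq]; omega) hne
        · have hxle : G.dist v x ≤ n - ω := by have := hmax x; omega
          obtain ⟨z, hzadj, hzd⟩ := step_down hG hxy
          obtain ⟨y', hy'1, hy'2⟩ := hlevel (G.dist v y) (by omega)
          have e1 : z = y' := hy'2 z hzd
          have e2 : y = y' := hy'2 y rfl
          rw [e2, ← e1]
          exact hzadj.symm
  -- the equivalence for the top level
  have htopcard' : #(Finset.univ.filter (fun u => G.dist v u = n - ω + 1)) = ω - 1 := htopcard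
  set η := Finset.equivFinOfCardEq htopcard' with hη_def
  -- the bijection
  set ψ : Fin n → Fin n := fun k =>
    if h : (k : ℕ) < ω - 1 then (η.symm ⟨(k : ℕ), h⟩ : Fin n) else uu (n - 1 - (k : ℕ))
    with hψ_def
  have hψlev : ∀ k, G.dist v (ψ k) = klev n ω k := by
    intro k
    simp only [hψ_def]
    unfold klev
    split_ifs with h
    · have hmem := (η.symm ⟨(k : ℕ), h⟩).2
      simp only [Finset.mem_filter, Finset.mem_univ, true_and] at hmem
      exact hmem
    · have hk : n - 1 - (k : ℕ) ≤ n - ω := by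
        have := k.isLt
        omega
      exact (huu (n - 1 - (k : ℕ)) hk).1
  have hψinj : Function.Injective ψ := by
    intro a b hab
    have hla := hψlev a
    have hlb := hψlev b
    rw [hab] at hla
    unfold klev at hla hlb
    have ha := a.isLt
    have hb := b.isLt
    split_ifs at hla hlb with k1 k2 k2
    · -- both in the top clique
      have : η.symm ⟨(a : ℕ), k1⟩ = η.symm ⟨(b : ℕ), k2⟩ := by
        apply Subtype.ext
        simpa only [hψ_def, dif_pos k1, dif_pos k2] using hab
      have h9 := η.symm.injective this
      exact Fin.ext (congrArg (fun x : Fin (ω - 1) => (x : ℕ)) h9)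
    · omega
    · omega
    · apply Fin.ext
      omega
  have hψbij : Function.Bijective ψ := Finite.injective_iff_bijective.mp hψinj
  refine ⟨?_⟩
  have Φ : kite n ω ≃g G := by
    refine ⟨Equiv.ofBijective ψ hψbij, ?_⟩
    intro a b
    simp only [Equiv.ofBijective_apply]
    rw [hadj_char, kite_adj_iff hω2 hωn, hψlev, hψlev]
    constructor
    · rintro ⟨h1, h⟩
      exact ⟨fun heq => h1 (by rw [heq]), h⟩
    · rintro ⟨h1, h⟩
      exact ⟨fun heq => h1 (hψinj heq), h⟩
  exact Φ.symm


theorem remoteness_cliqueNum {n : ℕ} (hn : 3 ≤ n) (G : SimpleGraph (Fin n))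
    (hG : G.Connected) :
    remoteness G ≤ ((n : ℝ) ^ 2 - (G.cliqueNum : ℝ) ^ 2 - n + 3 * G.cliqueNum - 2) / (2 * (n - 1)) ∧
      (remoteness G = ((n : ℝ) ^ 2 - (G.cliqueNum : ℝ) ^ 2 - n + 3 * G.cliqueNum - 2) / (2 * (n - 1)) ↔
        Nonempty (G ≃g kite n G.cliqueNum)) := by
  classical
  obtain ⟨hω2, hωn⟩ := two_le_cliqueNum hn G hG
  set ω := G.cliqueNum with hω_def
  set T : ℝ := (n : ℝ) ^ 2 - (ω : ℝ) ^ 2 - n + 3 * ω - 2 with hT_def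
  set S : Set ℝ := {x : ℝ | ∃ v : Fin n, x = transmission G v} with hS_def
  have hSne : S.Nonempty := ⟨transmission G ⟨0, by omega⟩, ⟨0, by omega⟩, rfl⟩
  have hSfin : S.Finite := by
    have : S = Set.range (fun v : Fin n => (transmission G v : ℝ)) := by
      ext x
      simp only [hS_def, Set.mem_setOf_eq, Set.mem_range]
      exact ⟨fun ⟨v, h⟩ => ⟨v, h.symm⟩, fun ⟨v, h⟩ => ⟨v, h.symm⟩⟩
    rw [this]
    exact Set.finite_range _
  have hub : ∀ x ∈ S, x ≤ T / 2 := by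
    rintro x ⟨u, rfl⟩
    have h := (transmission_core hn G hG u).1
    rw [← hω_def] at h
    have hr : ((2 * transmission G u + ω ^ 2 + n + 2 : ℕ) : ℝ) ≤ ((n ^ 2 + 3 * ω : ℕ) : ℝ) := by
      exact_mod_cast h
    push_cast at hr
    rw [hT_def]
    linarith
  have hsup_le : sSup S ≤ T / 2 := csSup_le hSne hub
  have hn1 : (0 : ℝ) < (n : ℝ) - 1 := by
    have : (3 : ℝ) ≤ n := by exact_mod_cast hn
    linarith
  have hrem : remoteness G = sSup S / ((n : ℝ) - 1) := by
    rw [remoteness, ← hS_def]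
  have hTdiv : T / (2 * ((n : ℝ) - 1)) = (T / 2) / ((n : ℝ) - 1) := by
    field_simp
  constructor
  · rw [hrem]
    calc sSup S / ((n : ℝ) - 1) ≤ (T / 2) / ((n : ℝ) - 1) := by
          exact div_le_div_of_nonneg_right hsup_le hn1.le
      _ = T / (2 * ((n : ℝ) - 1)) := hTdiv.symm
  · constructor
    · -- equality implies kite
      intro heq
      rw [hrem, hTdiv] at heq
      have hsup : sSup S = T / 2 := by
        have h2 := congrArg (fun x : ℝ => x * ((n : ℝ) - 1)) heq
        simp only [div_mul_cancel₀ _ hn1.ne'] at h2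
        exact h2
      obtain ⟨v, hv⟩ := Set.Nonempty.csSup_mem hSne hSfin
      rw [hsup] at hv
      -- hv : T / 2 = transmission G v
      have hnat : 2 * (∑ u, G.dist v u) + ω ^ 2 + n + 2 = n ^ 2 + 3 * ω := by
        have : ((2 * transmission G v + ω ^ 2 + n + 2 : ℕ) : ℝ)
            = ((n ^ 2 + 3 * ω : ℕ) : ℝ) := by
          push_cast
          rw [hT_def] at hv
          linarith [hv]
        have h2 : 2 * transmission G v + ω ^ 2 + n + 2 = n ^ 2 + 3 * ω := by exact_mod_cast this
        simpa [transmission] using h2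
      obtain ⟨hmax', hcard', hclq'⟩ := (transmission_core hn G hG v).2 (by
        rw [← hω_def]; exact hnat)
      rw [← hω_def] at hmax' hcard' hclq'
      exact reconstruction hn G hG v hω2 hωn hmax' hcard' hclq'
    · -- kite implies equality
      rintro ⟨φ⟩
      have hkconn : (kite n ω).Connected := (SimpleGraph.Iso.connected_iff (e := φ)).mp hG
      have hkclique : (kite n ω).cliqueNum = ω := (cliqueNum_iso φ).symm
      -- transmissions agree
      have htrans : ∀ u : Fin n, transmission G u = transmission (kite n ω) (φ u) := by
        intro u
        rw [transmission, transmission]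
        rw [← Equiv.sum_comp φ.toEquiv (fun x => (kite n ω).dist (φ u) x)]
        apply Finset.sum_congr rfl
        intro x _
        exact (dist_iso φ u x).symm
      -- the kite transmission bound
      have hkub : ∀ u : Fin n, (transmission (kite n ω) u : ℝ) ≤ T / 2 := by
        intro u
        have h := (transmission_core hn (kite n ω) hkconn u).1
        rw [hkclique] at h
        have hr : ((2 * transmission (kite n ω) u + ω ^ 2 + n + 2 : ℕ) : ℝ)
            ≤ ((n ^ 2 + 3 * ω : ℕ) : ℝ) := by
          have : 2 * transmission (kite n ω) u + ω ^ 2 + n + 2 ≤ n ^ 2 + 3 * ω := by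
            simpa [transmission] using h
          exact_mod_cast this
        push_cast at hr
        rw [hT_def]
        linarith
      have hkmax : (transmission (kite n ω) ⟨n - 1, by omega⟩ : ℝ) = T / 2 := by
        have h := kite_transmission hn hω2 hωn hkconn
        have hr : ((2 * transmission (kite n ω) ⟨n - 1, by omega⟩ + ω ^ 2 + n + 2 : ℕ) : ℝ)
            = ((n ^ 2 + 3 * ω : ℕ) : ℝ) := by
          have : 2 * transmission (kite n ω) ⟨n - 1, by omega⟩ + ω ^ 2 + n + 2
              = n ^ 2 + 3 * ω := by
            simpa [transmission] using h
          exact_mod_cast this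
        push_cast at hr
        rw [hT_def]
        linarith
      have hmem : (T / 2) ∈ S := by
        rw [hS_def]
        refine ⟨φ.symm ⟨n - 1, by omega⟩, ?_⟩
        rw [htrans (φ.symm ⟨n - 1, by omega⟩)]
        rw [show φ (φ.symm ⟨n - 1, by omega⟩) = ⟨n - 1, by omega⟩ from φ.apply_symm_apply _]
        exact hkmax.symm
      have hsup : sSup S = T / 2 :=
        le_antisymm hsup_le (le_csSup hSfin.bddAbove hmem)
      rw [hrem, hsup, hTdiv]
end

section
/- For every connected graph G on n ≥ 4 vertices, π(G) ≤ l̄(G) ≤ ∂₁(G)/(n-1) ≤ ρ(G), where ∂₁ is the largest eigenvalue of the distance matrix; all equalities hold if and only if G is transmission regular. -/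
/-!
Each transmission is a row sum of the distance matrix `D`. The smallest row sum is at most the
average row sum `𝟙ᵀ D 𝟙 / n`, a Rayleigh quotient of the symmetric matrix `D` and hence at most its
largest eigenvalue; by Gershgorin's theorem every real eigenvalue is at most the largest absolute
row sum, which for `D` is the largest transmission. Dividing by `n - 1` gives the chain
`π ≤ l̄ ≤ ∂₁ / (n - 1) ≤ ρ`, whose members all coincide iff its two ends do, i.e. iff the smallest
and largest transmissions agree.
-/

open SimpleGraph Finset

/-- The distance matrix of a graph. -/
noncomputable def distMatrix {n : ℕ} (G : SimpleGraph (Fin n)) : Matrix (Fin n) (Fin n) ℝ :=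
  fun u v => (G.dist u v : ℝ)

/-- The largest distance eigenvalue ∂₁. -/
noncomputable def maxDistEig {n : ℕ} (G : SimpleGraph (Fin n)) : ℝ :=
  sSup (spectrum ℝ (distMatrix G))

/-- The smallest distance eigenvalue ∂ₙ. -/
noncomputable def minDistEig {n : ℕ} (G : SimpleGraph (Fin n)) : ℝ :=
  sInf (spectrum ℝ (distMatrix G))

/-- A graph is transmission regular if all vertices have the same transmission. -/
def TransmissionRegular {n : ℕ} (G : SimpleGraph (Fin n)) : Prop :=
  ∀ u v : Fin n, transmission G u = transmission G v

open scoped MatrixOrder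

theorem ciInf_le_sum_div_card {ι : Type*} [Fintype ι] [Nonempty ι] (f : ι → ℝ) :
    ⨅ i, f i ≤ (∑ i, f i) / Fintype.card ι := by
  rw [le_div_iff₀ (by positivity), mul_comm, ← nsmul_eq_mul]
  exact Finset.card_nsmul_le_sum _ _ _ fun i _ => ciInf_le (Set.finite_range f).bddBelow i

theorem ciInf_eq_ciSup_iff {ι α : Type*} [Finite ι] [Nonempty ι]
    [ConditionallyCompleteLinearOrder α] (f : ι → α) : ⨅ i, f i = ⨆ i, f i ↔ ∀ i j, f i = f j := by
  constructor
  · intro h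
    have hsup : ∀ i, f i = ⨆ i, f i := fun i =>
      le_antisymm (le_ciSup (Set.finite_range f).bddAbove i)
        (h ▸ ciInf_le (Set.finite_range f).bddBelow i)
    exact fun i j => (hsup i).trans (hsup j).symm
  · intro h
    obtain ⟨i₀⟩ := ‹Nonempty ι›
    rw [iInf_congr fun i => h i i₀, iSup_congr fun i => h i i₀, ciInf_const, ciSup_const]

namespace Matrix

variable {ι : Type*} [Fintype ι] [DecidableEq ι]

theorem le_of_mem_spectrum_of_sum_abs_le {A : Matrix ι ι ℝ} {μ r : ℝ}
    (hμ : μ ∈ spectrum ℝ A) (hr : ∀ i, ∑ j, |A i j| ≤ r) : μ ≤ r := by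
  rw [← spectrum_toLin', ← Module.End.hasEigenvalue_iff_mem_spectrum] at hμ
  obtain ⟨k, hk⟩ := eigenvalue_mem_ball hμ
  rw [Metric.mem_closedBall, Real.dist_eq] at hk
  calc μ ≤ A k k + |μ - A k k| := by linarith [le_abs_self (μ - A k k)]
    _ ≤ |A k k| + ∑ j ∈ univ.erase k, |A k j| := by
        gcongr
        · exact le_abs_self _
        · simpa using hk
    _ = ∑ j, |A k j| := add_sum_erase _ (fun j => |A k j|) (mem_univ k)
    _ ≤ r := hr k

theorem IsHermitian.dotProduct_mulVec_le {A : Matrix ι ι ℝ} (hA : A.IsHermitian) (x : ι → ℝ) :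
    x ⬝ᵥ A *ᵥ x ≤ sSup (spectrum ℝ A) * (x ⬝ᵥ x) := by
  have hle : A ≤ algebraMap ℝ _ (sSup (spectrum ℝ A)) :=
    le_algebraMap_of_spectrum_le (fun μ hμ => le_csSup A.finite_real_spectrum.bddAbove hμ) hA
  simpa [Algebra.algebraMap_eq_smul_one, sub_mulVec, smul_mulVec, dotProduct_sub] using
    (le_iff.1 hle).dotProduct_mulVec_nonneg x

theorem IsHermitian.sum_div_card_le [Nonempty ι] {A : Matrix ι ι ℝ} (hA : A.IsHermitian) :
    (∑ i, ∑ j, A i j) / Fintype.card ι ≤ sSup (spectrum ℝ A) := by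
  rw [div_le_iff₀ (by positivity)]
  simpa [dotProduct, mulVec] using hA.dotProduct_mulVec_le 1

end Matrix

section DistanceMatrix

variable {n : ℕ} (G : SimpleGraph (Fin n))

theorem distMatrix_isHermitian : (distMatrix G).IsHermitian := by
  ext u v
  simp [distMatrix, SimpleGraph.dist_comm]

theorem sum_distMatrix_apply (v : Fin n) : ∑ u, distMatrix G v u = transmission G v := by
  simp [distMatrix, transmission]

theorem transmission_set_eq_range :
    {x : ℝ | ∃ v : Fin n, x = transmission G v} = Set.range fun v => (transmission G v : ℝ) := by
  ext x
  simp [eq_comm]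

theorem proximity_eq : proximity G = (⨅ v, (transmission G v : ℝ)) / (n - 1) := by
  rw [proximity, transmission_set_eq_range, iInf]

theorem remoteness_eq : remoteness G = (⨆ v, (transmission G v : ℝ)) / (n - 1) := by
  rw [remoteness, transmission_set_eq_range, iSup]

theorem avgDist_eq : avgDist G = (∑ v, (transmission G v : ℝ)) / n / (n - 1) := by
  simp only [avgDist, div_div, ← sum_distMatrix_apply]
  rfl

theorem sum_transmission_div_le_maxDistEig [NeZero n] :
    (∑ v, (transmission G v : ℝ)) / n ≤ maxDistEig G := by
  simpa [maxDistEig, sum_distMatrix_apply] using (distMatrix_isHermitian G).sum_div_card_le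

theorem maxDistEig_le_iSup_transmission : maxDistEig G ≤ ⨆ v, (transmission G v : ℝ) := by
  have hbdd := (Set.finite_range fun v => (transmission G v : ℝ)).bddAbove
  refine Real.sSup_le (fun μ hμ => Matrix.le_of_mem_spectrum_of_sum_abs_le hμ fun v => ?_)
    (Real.iSup_nonneg fun v => Nat.cast_nonneg _)
  simpa [distMatrix, ← sum_distMatrix_apply] using le_ciSup hbdd v

theorem proximity_eq_remoteness_iff (hn : 1 < n) :
    proximity G = remoteness G ↔ TransmissionRegular G := by
  have : NeZero n := ⟨by omega⟩
  have hn' : (n - 1 : ℝ) ≠ 0 := sub_ne_zero.2 (by exact_mod_cast hn.ne')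
  rw [proximity_eq, remoteness_eq, div_left_inj' hn', ciInf_eq_ciSup_iff]
  simp only [Nat.cast_inj, TransmissionRegular]

end DistanceMatrix

theorem proximity_avgDist_maxDistEig_remoteness_general {n : ℕ} (hn : 4 ≤ n)
    (G : SimpleGraph (Fin n)) :
    (proximity G ≤ avgDist G ∧ avgDist G ≤ maxDistEig G / (n - 1) ∧
      maxDistEig G / (n - 1) ≤ remoteness G) ∧
    ((proximity G = avgDist G ∧ avgDist G = maxDistEig G / (n - 1) ∧
      maxDistEig G / (n - 1) = remoteness G) ↔ TransmissionRegular G) := by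
  have : NeZero n := ⟨by omega⟩
  have hn₁ : (0 : ℝ) ≤ n - 1 := sub_nonneg.2 (by exact_mod_cast NeZero.one_le)
  have h₁ : proximity G ≤ avgDist G := by
    rw [proximity_eq, avgDist_eq]
    gcongr
    simpa using ciInf_le_sum_div_card fun v => (transmission G v : ℝ)
  have h₂ : avgDist G ≤ maxDistEig G / (n - 1) := by
    rw [avgDist_eq]
    gcongr
    exact sum_transmission_div_le_maxDistEig G
  have h₃ : maxDistEig G / (n - 1) ≤ remoteness G := by
    rw [remoteness_eq]
    gcongr
    exact maxDistEig_le_iSup_transmission G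
  refine ⟨⟨h₁, h₂, h₃⟩, ?_⟩
  rw [← proximity_eq_remoteness_iff G (by omega)]
  constructor
  · rintro ⟨e₁, e₂, e₃⟩
    rw [e₁, e₂, e₃]
  · intro h
    exact ⟨by linarith, by linarith, by linarith⟩

theorem proximity_avgDist_maxDistEig_remoteness {n : ℕ} (hn : 4 ≤ n)
    (G : SimpleGraph (Fin n)) (hG : G.Connected) :
    (proximity G ≤ avgDist G ∧ avgDist G ≤ maxDistEig G / (n - 1) ∧
      maxDistEig G / (n - 1) ≤ remoteness G) ∧
    ((proximity G = avgDist G ∧ avgDist G = maxDistEig G / (n - 1) ∧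
      maxDistEig G / (n - 1) = remoteness G) ↔ TransmissionRegular G) :=
  proximity_avgDist_maxDistEig_remoteness_general hn G
end

section
/- For every connected graph G with diameter D, the remoteness satisfies ρ(G) > D/2. -/
open SimpleGraph Finset

theorem remoteness_gt_half_diam {n : ℕ} (hn : 2 ≤ n) (G : SimpleGraph (Fin n))
    (hG : G.Connected) :
    (graphDiam G : ℝ) / 2 < remoteness G := by
  have hnpos : (0:ℕ) < n := by omega
  -- the set of transmissions
  set S : Set ℝ := {x : ℝ | ∃ v : Fin n, x = transmission G v} with hS
  have hSeq : S = (fun v : Fin n => (transmission G v : ℝ)) '' Set.univ := by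
    ext x; simp [hS, eq_comm]
  have hfin : S.Finite := by rw [hSeq]; exact (Set.finite_univ).image _
  have hne : S.Nonempty := by
    refine ⟨(transmission G ⟨0, hnpos⟩ : ℝ), ⟨⟨0, hnpos⟩, rfl⟩⟩
  have hbdd : BddAbove S := hfin.bddAbove
  have hle : ∀ v : Fin n, (transmission G v : ℝ) ≤ sSup S :=
    fun v => le_csSup hbdd ⟨v, rfl⟩
  -- D achieved at some pair
  obtain ⟨p, -, hp⟩ := Finset.exists_mem_eq_sup (Finset.univ : Finset (Fin n × Fin n))
    ⟨(⟨0, hnpos⟩, ⟨0, hnpos⟩), Finset.mem_univ _⟩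
    (fun p : Fin n × Fin n => G.dist p.1 p.2)
  set D : ℕ := graphDiam G with hD
  -- D ≥ 1
  have hD1 : 1 ≤ D := by
    have h01 : (⟨0, by omega⟩ : Fin n) ≠ ⟨1, by omega⟩ := by
      simp [Fin.ext_iff]
    have := hG.pos_dist_of_ne h01
    calc 1 ≤ G.dist ⟨0, by omega⟩ ⟨1, by omega⟩ := this
    _ ≤ D := Finset.le_sup (f := fun p : Fin n × Fin n => G.dist p.1 p.2)
        (Finset.mem_univ ((⟨0, by omega⟩ : Fin n), (⟨1, by omega⟩ : Fin n)))
  -- key inequality: n * D ≤ t(p.1) + t(p.2)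
  have hkey : n * D ≤ transmission G p.1 + transmission G p.2 := by
    have : ∀ w : Fin n, D ≤ G.dist p.1 w + G.dist p.2 w := by
      intro w
      have := hG.dist_triangle (u := p.1) (v := w) (w := p.2)
      rw [SimpleGraph.dist_comm (G := G) (u := w) (v := p.2)] at this
      calc D = G.dist p.1 p.2 := hp
      _ ≤ G.dist p.1 w + G.dist p.2 w := this
    calc n * D = ∑ _w : Fin n, D := by simp [mul_comm]
    _ ≤ ∑ w : Fin n, (G.dist p.1 w + G.dist p.2 w) := Finset.sum_le_sum fun w _ => this w
    _ = transmission G p.1 + transmission G p.2 := by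
        rw [Finset.sum_add_distrib]; rfl
  -- so some transmission ≥ n*D/2, in ℝ
  have hmax : (n : ℝ) * D / 2 ≤ sSup S := by
    have h1 := hle p.1
    have h2 := hle p.2
    have hkeyR : (n : ℝ) * D ≤ (transmission G p.1 : ℝ) + (transmission G p.2 : ℝ) := by
      exact_mod_cast hkey
    linarith
  have hn1 : (1:ℝ) ≤ (n:ℝ) - 1 := by
    have : (2:ℝ) ≤ n := by exact_mod_cast hn
    linarith
  have hDpos : (1:ℝ) ≤ (D:ℝ) := by exact_mod_cast hD1
  rw [remoteness, ← hS]
  rw [div_lt_div_iff₀ (by norm_num) (by linarith)]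
  have : ((n:ℝ) - 1) * D < (n:ℝ) * D := by nlinarith
  calc (D:ℝ) * ((n:ℝ) - 1) = ((n:ℝ) - 1) * D := by ring
  _ < (n:ℝ) * D := this
  _ ≤ sSup S * 2 := by linarith
end
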